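/- Intersubstitutivity of provable equivalents under the fixed point operator: if φ and ψ are formulas modalised in the variable p and CHL ⊢ φ ↔ ψ, then CHL ⊢ Ϝp.φ ↔ Ϝp.ψ. -/

import Mathlib

/-!
Cyclic syntax for Cyclic Henkin Logic (Visser, "Cyclic Henkin Logic").

A graph is a directed pointed labeled graph with ordered successors;
formulas of the cyclic modal language `𝕃°` are such graphs over the
modal labels, whose box-occurrences guard all cycles.
-/


theorem finite_option {α : Type} (h : Finite α) : Finite (Option α) := by
  haveI := h
  haveI : Fintype α := Fintype.ofFinite _
  exact Finite.of_fintype _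

/-- Directed pointed labeled graphs with ordered successors over a label
set `L` with arity function `ar`.  The vertex set is finite. -/
structure RGraph (L : Type) (ar : L → ℕ) : Type 1 where
  V : Type
  fin : Finite V
  root : V
  label : V → L
  succ : (a : V) → Fin (ar (label a)) → V

namespace RGraph

variable {L : Type} {ar : L → ℕ}

/-- The edge relation `a Ŝ b`. -/
def Edge (G : RGraph L ar) (a b : G.V) : Prop := ∃ i, G.succ a i = b

/-- Every vertex is reachable from the root by a finite path. -/
def Reachable (G : RGraph L ar) : Prop :=
  ∀ a, Relation.ReflTransGen G.Edge G.root a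

/-- `C` is a cycle: its elements can be arranged in a closed path of
pairwise distinct vertices. -/
def IsCycle (G : RGraph L ar) (C : Set G.V) : Prop :=
  ∃ (k : ℕ) (f : Fin (k + 1) → G.V), Function.Injective f ∧ Set.range f = C ∧
    (∀ i : Fin k, G.Edge (f i.castSucc) (f i.succ)) ∧ G.Edge (f (Fin.last k)) (f 0)

/-- A guard: a set of vertices meeting every cycle. -/
def IsGuard (G : RGraph L ar) (W : Set G.V) : Prop :=
  ∀ C, G.IsCycle C → (C ∩ W).Nonempty

/-- The number of cycles `c(G)`. -/
noncomputable def numCycles (G : RGraph L ar) : ℕ :=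
  Set.ncard {C : Set G.V | G.IsCycle C}

/-- A vertex on a cycle. -/
def OnCycle (G : RGraph L ar) (a : G.V) : Prop := ∃ C, G.IsCycle C ∧ a ∈ C

/-- The root is a cycle vertex. -/
def RootOnCycle (G : RGraph L ar) : Prop := G.OnCycle G.root

/-- Acyclic graphs. -/
def Acyclic (G : RGraph L ar) : Prop := ∀ C, ¬ G.IsCycle C

/-- Bisimulations between graphs. -/
def IsBisim (G G' : RGraph L ar) (R : G.V → G'.V → Prop) : Prop :=
  ∀ a a', R a a' → ∃ h : G.label a = G'.label a',
    ∀ i : Fin (ar (G.label a)),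
      R (G.succ a i) (G'.succ a' (Fin.cast (congrArg ar h) i))

/-- Bisimilarity `G ≃ G'`: some bisimulation relates the roots. -/
def Bisim (G G' : RGraph L ar) : Prop :=
  ∃ R, G.IsBisim G' R ∧ R G.root G'.root

/-- Isomorphism `G ≅ G'`: a bijective bisimulation relating the roots. -/
def Iso (G G' : RGraph L ar) : Prop :=
  ∃ e : G.V ≃ G'.V, G.IsBisim G' (fun a b => e a = b) ∧ e G.root = G'.root

end RGraph

/-- Labels for the cyclic modal language `𝕃°`. -/
inductive FLab : Type
  | top | bot | var (n : ℕ) | neg | box | and | or | imp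
deriving DecidableEq

/-- Arities of the labels. -/
@[reducible] def FLab.ar : FLab → ℕ
  | .top => 0 | .bot => 0 | .var _ => 0
  | .neg => 1 | .box => 1
  | .and => 2 | .or => 2 | .imp => 2

/-- Raw formulas of `𝕃°`: graphs over the modal labels. -/
abbrev Fm := RGraph FLab FLab.ar

namespace Fm

/-- `p` occurs in `φ`. -/
def Occurs (φ : Fm) (p : ℕ) : Prop := ∃ a, φ.label a = .var p

/-- The set `bo(φ)` of box-occurrences. -/
def boOcc (φ : Fm) : Set φ.V := {a | φ.label a = .box}

/-- The guard condition: every cycle contains a box-occurrence. -/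
def Guarded (φ : Fm) : Prop := φ.IsGuard φ.boOcc

/-- `φ` is a formula: a (rooted, reachable) graph whose box-occurrences
form a guard. -/
def WF (φ : Fm) : Prop := φ.Reachable ∧ φ.Guarded

/-- An edge leaving a non-box vertex. -/
def EdgeNB (φ : Fm) (a b : φ.V) : Prop := φ.Edge a b ∧ φ.label a ≠ .box

/-- `φ` is modalised in `p`: every path from the root to a `p`-occurrence
passes through a box-occurrence. -/
def Modalised (φ : Fm) (p : ℕ) : Prop :=
  ∀ a, Relation.ReflTransGen φ.EdgeNB φ.root a → φ.label a ≠ .var p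

theorem Modalised.root_ne {φ : Fm} {p : ℕ} (h : φ.Modalised p) :
    φ.label φ.root ≠ .var p :=
  h φ.root Relation.ReflTransGen.refl

/-! ### Operations on formulas -/

/-- One-point graph with a 0-ary label. -/
def ofLab0 (l : FLab) : Fm where
  V := PUnit
  fin := inferInstance
  root := .unit
  label := fun _ => l
  succ := fun _ _ => .unit

def topFm : Fm := ofLab0 .top
def botFm : Fm := ofLab0 .bot
def varFm (n : ℕ) : Fm := ofLab0 (.var n)

def lab1 (l : FLab) (φ : Fm) : Option φ.V → FLab
  | none => l
  | some a => φ.label a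

/-- Add a fresh root with 1-ary label `l` above `φ`. -/
def ofLab1 (l : FLab) (φ : Fm) : Fm where
  V := Option φ.V
  fin := finite_option φ.fin
  root := none
  label := lab1 l φ
  succ := fun a => match a with
    | none => fun _ => some φ.root
    | some b => fun i => some (φ.succ b i)

def neg (φ : Fm) : Fm := ofLab1 .neg φ
def box (φ : Fm) : Fm := ofLab1 .box φ

def lab2 (l : FLab) (φ ψ : Fm) : Option (φ.V ⊕ ψ.V) → FLab
  | none => l
  | some (.inl a) => φ.label a
  | some (.inr b) => ψ.label b

/-- Add a fresh root with 2-ary label `l` above the disjoint sum of `φ`, `ψ`. -/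
def ofLab2 (l : FLab) (φ ψ : Fm) : Fm where
  V := Option (φ.V ⊕ ψ.V)
  fin := finite_option (by haveI := φ.fin; haveI := ψ.fin; exact inferInstance)
  root := none
  label := lab2 l φ ψ
  succ := fun a => match a with
    | none => fun i => if (i : ℕ) = 0 then some (.inl φ.root) else some (.inr ψ.root)
    | some (.inl a) => fun i => some (.inl (φ.succ a i))
    | some (.inr b) => fun i => some (.inr (ψ.succ b i))

def and (φ ψ : Fm) : Fm := ofLab2 .and φ ψ
def or (φ ψ : Fm) : Fm := ofLab2 .or φ ψ
def imp (φ ψ : Fm) : Fm := ofLab2 .imp φ ψ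

/-- `φ ↔ ψ` as `(φ→ψ) ∧ (ψ→φ)`. -/
def iff (φ ψ : Fm) : Fm := Fm.and (Fm.imp φ ψ) (Fm.imp ψ φ)

/-- The fixed point `Ϝp.φ`: identify the root with all `p`-occurrences,
keeping the label of the root.  (The root is not a `p`-occurrence, e.g.
because `φ` is modalised in `p`.) -/
def fix (φ : Fm) (p : ℕ) (h : φ.label φ.root ≠ .var p) : Fm where
  V := {a : φ.V // φ.label a ≠ .var p}
  fin := by haveI := φ.fin; exact inferInstance
  root := ⟨φ.root, h⟩
  label := fun a => φ.label a.1
  succ := fun a i =>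
    if hb : φ.label (φ.succ a.1 i) = .var p then ⟨φ.root, h⟩
    else ⟨φ.succ a.1 i, hb⟩

/-! ### Substitution -/

def varIdx : FLab → Option ℕ
  | .var q => some q
  | _ => none

/-- The copy of `σ q` hanging at a `q`-occurrence. -/
def copyT (σ : ℕ → Fm) : Option ℕ → Type
  | some q => (σ q).V
  | none => PUnit

theorem copyT_finite (σ : ℕ → Fm) : ∀ o, Finite (copyT σ o)
  | some q => (σ q).fin
  | none => show Finite PUnit from inferInstance

def copyRoot (σ : ℕ → Fm) : ∀ o, copyT σ o
  | some q => (σ q).root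
  | none => .unit

def copyLabel (σ : ℕ → Fm) (d : FLab) : ∀ o, copyT σ o → FLab
  | some q, b => (σ q).label b
  | none, _ => d

/-- Vertices of the substitution `φσ`. -/
def SubV (φ : Fm) (σ : ℕ → Fm) : Type :=
  Σ a : φ.V, copyT σ (varIdx (φ.label a))

def substSucc (φ : Fm) (σ : ℕ → Fm) (a : φ.V) :
    ∀ (o : Option ℕ), o = varIdx (φ.label a) → ∀ b : copyT σ o,
      Fin (copyLabel σ (φ.label a) o b).ar → SubV φ σ
  | some q, h, b, i => ⟨a, cast (congrArg (copyT σ) h) ((σ q).succ b i)⟩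
  | none, _, _, i => ⟨φ.succ a i, copyRoot σ _⟩

/-- Simultaneous substitution: every `q`-occurrence of `φ` is identified
with the root of a disjoint copy of `σ q`, keeping the label of the root
of `σ q`. -/
def subst (φ : Fm) (σ : ℕ → Fm) : Fm where
  V := SubV φ σ
  fin := by
    haveI := φ.fin
    haveI : ∀ a : φ.V, Finite (copyT σ (varIdx (φ.label a))) :=
      fun a => copyT_finite σ _
    exact (inferInstance : Finite (Σ a : φ.V, copyT σ (varIdx (φ.label a))))
  root := ⟨φ.root, copyRoot σ _⟩
  label := fun x => copyLabel σ (φ.label x.1) _ x.2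
  succ := fun x => substSucc φ σ x.1 _ rfl x.2

/-- Substitution of a single variable, `φ[p:ψ]`. -/
def subst1 (φ : Fm) (p : ℕ) (ψ : Fm) : Fm :=
  φ.subst (fun q => if q = p then ψ else varFm q)

/-! ### Snip -/

-- Redirect all incoming edges of the root to a new leaf labeled `p`.
open Classical in
noncomputable def snipC (φ : Fm) (p : ℕ) : Fm where
  V := Option φ.V
  fin := finite_option φ.fin
  root := some φ.root
  label := lab1 (.var p) φ
  succ := fun a => match a with
    | none => Fin.elim0
    | some a => fun i =>
        if φ.succ a i = φ.root then none else some (φ.succ a i)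

-- `snip(φ,p)`: if the root is on a cycle, redirect all incoming edges
-- of the root to a new leaf labeled `p`; otherwise `φ` itself.
open Classical in
noncomputable def snip (φ : Fm) (p : ℕ) : Fm :=
  if φ.RootOnCycle then φ.snipC p else φ

/-- `snip(φ,ψ) := snip(φ,p)[p:ψ]` (for a variable `p` not occurring in `φ`). -/
noncomputable def snipF (φ : Fm) (p : ℕ) (ψ : Fm) : Fm :=
  (φ.snip p).subst1 p ψ

theorem snip_root_ne {φ : Fm} {p : ℕ} (h : φ.RootOnCycle) (hp : ¬ φ.Occurs p) :
    (φ.snip p).label (φ.snip p).root ≠ .var p := by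
  rw [snip, if_pos h]
  exact fun hc => hp ⟨φ.root, hc⟩

/-! ### The transitive closure modality `□•φ := Ϝp.□(φ∧p)` -/

def bslab (φ : Fm) : Option (Option φ.V) → FLab
  | none => .box
  | some none => .and
  | some (some a) => φ.label a

/-- `□•φ := Ϝp.□(φ∧p)`, for `p` not occurring in `φ`: a box-root whose
`∧`-successor returns to the box-root. -/
def boxStar (φ : Fm) : Fm where
  V := Option (Option φ.V)
  fin := finite_option (finite_option φ.fin)
  root := none
  label := bslab φ
  succ := fun a => match a with
    | none => fun _ => some none
    | some none => fun i => if (i : ℕ) = 0 then some (some φ.root) else none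
    | some (some a) => fun i => some (some (φ.succ a i))

/-- `⊡•φ := φ ∧ □•φ`. -/
def boxDotStar (φ : Fm) : Fm := Fm.and φ (boxStar φ)

/-- Finite conjunctions. -/
def bigAnd : List Fm → Fm
  | [] => topFm
  | φ :: l => Fm.and φ (bigAnd l)

/-- Apply a label, as a connective, to arguments. -/
def applyLab : (l : FLab) → (Fin l.ar → Fm) → Fm
  | .top, _ => topFm
  | .bot, _ => botFm
  | .var n, _ => varFm n
  | .neg, f => neg (f 0)
  | .box, f => box (f 0)
  | .and, f => Fm.and (f 0) (f 1)
  | .or, f => Fm.or (f 0) (f 1)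
  | .imp, f => Fm.imp (f 0) (f 1)

/-- First successor (defaulting to `a` itself at leaves). -/
def succ0 (φ : Fm) (a : φ.V) : φ.V :=
  if h : 0 < (φ.label a).ar then φ.succ a ⟨0, h⟩ else a

/-- The subgraph of `φ` generated by `a`. -/
def restrict (φ : Fm) (a : φ.V) : Fm where
  V := {b : φ.V // Relation.ReflTransGen φ.Edge a b}
  fin := by haveI := φ.fin; exact inferInstance
  root := ⟨a, Relation.ReflTransGen.refl⟩
  label := fun b => φ.label b.1
  succ := fun b i => ⟨φ.succ b.1 i, b.2.tail ⟨i, rfl⟩⟩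

/-- A variable not occurring in `φ`. -/
noncomputable def freshVar (φ : Fm) : ℕ := by
  classical
  haveI := φ.fin
  haveI : Fintype φ.V := Fintype.ofFinite _
  exact Finset.univ.sup fun a => match φ.label a with | .var q => q + 1 | _ => 0

/-- `snip(φ,⊤)`. -/
noncomputable def snipTop (φ : Fm) : Fm := φ.snipF φ.freshVar topFm

/-- The list of box-occurrences of `φ`. -/
noncomputable def boxOccList (φ : Fm) : List φ.V := by
  classical
  haveI := φ.fin
  haveI : Fintype φ.V := Fintype.ofFinite _
  exact (Finset.univ.filter fun a => φ.label a = FLab.box).toList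

end Fm

/-! ### Propositional tautologies (as parse trees) -/

inductive PForm : Type
  | var (n : ℕ) | top | bot
  | neg (A : PForm) | and (A B : PForm) | or (A B : PForm) | imp (A B : PForm)

def PForm.eval (v : ℕ → Bool) : PForm → Bool
  | .var n => v n
  | .top => true
  | .bot => false
  | .neg A => !A.eval v
  | .and A B => A.eval v && B.eval v
  | .or A B => A.eval v || B.eval v
  | .imp A B => !A.eval v || B.eval v

/-- Propositional tautology. -/
def PForm.Taut (A : PForm) : Prop := ∀ v, A.eval v = true

/-- Substitution instance of a parse tree by formulas of `𝕃°`. -/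
def PForm.substFm (σ : ℕ → Fm) : PForm → Fm
  | .var n => σ n
  | .top => Fm.topFm
  | .bot => Fm.botFm
  | .neg A => Fm.neg (A.substFm σ)
  | .and A B => Fm.and (A.substFm σ) (B.substFm σ)
  | .or A B => Fm.or (A.substFm σ) (B.substFm σ)
  | .imp A B => Fm.imp (A.substFm σ) (B.substFm σ)

/-! ### Cyclic Henkin Logic -/

/-- Cyclic Henkin Logic `CHL`: modus ponens, necessitation, substitution
instances of propositional tautologies, distribution, bisimilarity, and
Löb's Rule. -/
inductive CHL : Fm → Prop
  | mp {φ ψ : Fm} : CHL (Fm.imp φ ψ) → CHL φ → CHL ψ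
  | nec {φ : Fm} : CHL φ → CHL (Fm.box φ)
  | taut {A : PForm} (σ : ℕ → Fm) : A.Taut → CHL (A.substFm σ)
  | k (φ ψ : Fm) : CHL (Fm.imp (Fm.box (Fm.imp φ ψ)) (Fm.imp (Fm.box φ) (Fm.box ψ)))
  | bisim {φ ψ : Fm} : RGraph.Bisim φ ψ → CHL (Fm.iff φ ψ)
  | lob {φ : Fm} : CHL (Fm.imp (Fm.box φ) φ) → CHL φ

/-- `GL°`: `CHL` plus the axiom scheme `□φ → □□φ`. -/
inductive GLo : Fm → Prop
  | mp {φ ψ : Fm} : GLo (Fm.imp φ ψ) → GLo φ → GLo ψ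
  | nec {φ : Fm} : GLo φ → GLo (Fm.box φ)
  | taut {A : PForm} (σ : ℕ → Fm) : A.Taut → GLo (A.substFm σ)
  | k (φ ψ : Fm) : GLo (Fm.imp (Fm.box (Fm.imp φ ψ)) (Fm.imp (Fm.box φ) (Fm.box ψ)))
  | bisim {φ ψ : Fm} : RGraph.Bisim φ ψ → GLo (Fm.iff φ ψ)
  | lob {φ : Fm} : GLo (Fm.imp (Fm.box φ) φ) → GLo φ
  | four (φ : Fm) : GLo (Fm.imp (Fm.box φ) (Fm.box (Fm.box φ)))

/-- Löb's Logic `GL` on the acyclic formulas. -/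
inductive GLlogic : Fm → Prop
  | mp {φ ψ : Fm} : GLlogic (Fm.imp φ ψ) → GLlogic φ → GLlogic ψ
  | nec {φ : Fm} : GLlogic φ → GLlogic (Fm.box φ)
  | taut {A : PForm} (σ : ℕ → Fm) : (∀ q, (σ q).Acyclic) → A.Taut → GLlogic (A.substFm σ)
  | k (φ ψ : Fm) : φ.Acyclic → ψ.Acyclic →
      GLlogic (Fm.imp (Fm.box (Fm.imp φ ψ)) (Fm.imp (Fm.box φ) (Fm.box ψ)))
  | bisim {φ ψ : Fm} : φ.Acyclic → ψ.Acyclic → RGraph.Bisim φ ψ → GLlogic (Fm.iff φ ψ)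
  | lob {φ : Fm} : φ.Acyclic → GLlogic (Fm.imp (Fm.box φ) φ) → GLlogic φ
  | four (φ : Fm) : φ.Acyclic → GLlogic (Fm.imp (Fm.box φ) (Fm.box (Fm.box φ)))

/-! ### Systems of equations -/

/-- The system `ℰ` (given by `E` on the finite variable set `Q`) is
modalised: its dependency graph is acyclic. -/
def SysModalised (Q : Finset ℕ) (E : ℕ → Fm) : Prop :=
  ∀ q ∈ Q, ¬ Relation.TransGen
      (fun x y => x ∈ Q ∧ y ∈ Q ∧ ¬ (E x).Modalised y) q q

/-- The substitution determined by a solution candidate `F` on `Q`. -/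
def sysSubst (Q : Finset ℕ) (F : ℕ → Fm) : ℕ → Fm :=
  fun q => if q ∈ Q then F q else Fm.varFm q

/-- `F` solves the system `E` on `Q`. -/
def IsSolution (Q : Finset ℕ) (E : ℕ → Fm) (F : ℕ → Fm) : Prop :=
  (∀ q ∈ Q, (F q).WF) ∧
  (∀ q ∈ Q, ∀ q' ∈ Q, ¬ (F q).Occurs q') ∧
  (∀ q ∈ Q, RGraph.Bisim (F q) ((E q).subst (sysSubst Q F)))

/-! ### Local translations -/

/-- A local translation of the formula `φ` into the logic `Λ`. -/
def IsLocalTranslation (Λ : Fm → Prop) (φ : Fm) (T : φ.V → Fm) : Prop :=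
  ∀ a : φ.V, Λ (Fm.iff (T a) (Fm.applyLab (φ.label a) (fun i => T (φ.succ a i))))

-- Substitution determined by a finite assignment.
open Classical in
noncomputable def substOf {ι : Type} (s : ι → ℕ) (ψ : ι → Fm) : ℕ → Fm :=
  fun q => if h : ∃ i, s i = q then ψ h.choose else Fm.varFm q

/-- The characterising equations of the de Jongh–Sambin map `js*`,
defined by course-of-values recursion on the number of cycles and guard
recursion on the box-occurrences on a cycle. -/
def IsJsStar (jsS : (φ : Fm) → φ.V → Fm) : Prop :=
  (∀ (φ : Fm) (a : φ.V), ¬ (φ.label a = .box ∧ φ.OnCycle a) →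
      jsS φ a = Fm.applyLab (φ.label a) (fun i => jsS φ (φ.succ a i))) ∧
  (∀ (φ : Fm) (a : φ.V), φ.label a = .box → φ.OnCycle a →
      jsS φ a = jsS (Fm.snipTop (φ.restrict a)) (Fm.snipTop (φ.restrict a)).root) ∧
  (∀ (φ : Fm) (a : φ.V), (jsS φ a).Acyclic)
/-! ### Auxiliary development for `fix_congruence` -/

section Toolkit
open Fm

/-- `iff` at the level of parse trees. -/
def PIff (A B : PForm) : PForm := .and (.imp A B) (.imp B A)

/-- Substitution from a list. -/
def sV (l : List Fm) : ℕ → Fm := fun n => l.getD n Fm.topFm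

namespace CHL

lemma ofIff {x y : Fm} (h1 : CHL (Fm.iff x y)) (h2 : CHL x) : CHL y := by
  have t : (PForm.imp (PIff (.var 0) (.var 1)) (.imp (.var 0) (.var 1))).Taut := by
    intro v; simp only [PForm.eval, PIff]; cases v 0 <;> cases v 1 <;> rfl
  exact CHL.mp (CHL.mp (CHL.taut (sV [x, y]) t) h1) h2

lemma iff_refl (x : Fm) : CHL (Fm.iff x x) := by
  have t : (PIff (.var 0) (.var 0)).Taut := by
    intro v; simp only [PForm.eval, PIff]; cases v 0 <;> rfl
  exact CHL.taut (sV [x]) t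

lemma iff_symm {x y : Fm} (h : CHL (Fm.iff x y)) : CHL (Fm.iff y x) := by
  have t : (PForm.imp (PIff (.var 0) (.var 1)) (PIff (.var 1) (.var 0))).Taut := by
    intro v; simp only [PForm.eval, PIff]; cases v 0 <;> cases v 1 <;> rfl
  exact CHL.mp (CHL.taut (sV [x, y]) t) h

lemma iff_trans {x y z : Fm} (h1 : CHL (Fm.iff x y)) (h2 : CHL (Fm.iff y z)) :
    CHL (Fm.iff x z) := by
  have t : (PForm.imp (PIff (.var 0) (.var 1))
      (.imp (PIff (.var 1) (.var 2)) (PIff (.var 0) (.var 2)))).Taut := by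
    intro v; simp only [PForm.eval, PIff]; cases v 0 <;> cases v 1 <;> cases v 2 <;> rfl
  exact CHL.mp (CHL.mp (CHL.taut (sV [x, y, z]) t) h1) h2

lemma imp_trans {x y z : Fm} (h1 : CHL (Fm.imp x y)) (h2 : CHL (Fm.imp y z)) :
    CHL (Fm.imp x z) := by
  have t : (PForm.imp (.imp (.var 0) (.var 1))
      (.imp (.imp (.var 1) (.var 2)) (.imp (.var 0) (.var 2)))).Taut := by
    intro v; simp only [PForm.eval]; cases v 0 <;> cases v 1 <;> cases v 2 <;> rfl
  exact CHL.mp (CHL.mp (CHL.taut (sV [x, y, z]) t) h1) h2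

lemma weaken {x : Fm} (P : Fm) (h : CHL x) : CHL (Fm.imp P x) := by
  have t : (PForm.imp (.var 1) (.imp (.var 0) (.var 1))).Taut := by
    intro v; simp only [PForm.eval]; cases v 0 <;> cases v 1 <;> rfl
  exact CHL.mp (CHL.taut (sV [P, x]) t) h

lemma box_mono {x y : Fm} (h : CHL (Fm.imp x y)) :
    CHL (Fm.imp (Fm.box x) (Fm.box y)) :=
  CHL.mp (CHL.k x y) (CHL.nec h)

lemma iff_intro {x y : Fm} (h1 : CHL (Fm.imp x y)) (h2 : CHL (Fm.imp y x)) :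
    CHL (Fm.iff x y) := by
  have t : (PForm.imp (.imp (.var 0) (.var 1))
      (.imp (.imp (.var 1) (.var 0)) (PIff (.var 0) (.var 1)))).Taut := by
    intro v; simp only [PForm.eval, PIff]; cases v 0 <;> cases v 1 <;> rfl
  exact CHL.mp (CHL.mp (CHL.taut (sV [x, y]) t) h1) h2

lemma iff_mp {x y : Fm} (h : CHL (Fm.iff x y)) : CHL (Fm.imp x y) := by
  have t : (PForm.imp (PIff (.var 0) (.var 1)) (.imp (.var 0) (.var 1))).Taut := by
    intro v; simp only [PForm.eval, PIff]; cases v 0 <;> cases v 1 <;> rfl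
  exact CHL.mp (CHL.taut (sV [x, y]) t) h

lemma iff_mpr {x y : Fm} (h : CHL (Fm.iff x y)) : CHL (Fm.imp y x) := by
  have t : (PForm.imp (PIff (.var 0) (.var 1)) (.imp (.var 1) (.var 0))).Taut := by
    intro v; simp only [PForm.eval, PIff]; cases v 0 <;> cases v 1 <;> rfl
  exact CHL.mp (CHL.taut (sV [x, y]) t) h

lemma box_iff {x y : Fm} (h : CHL (Fm.iff x y)) :
    CHL (Fm.iff (Fm.box x) (Fm.box y)) :=
  iff_intro (box_mono (iff_mp h)) (box_mono (iff_mpr h))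

/-- `⊢ □(x↔y) → (□x↔□y)`. -/
lemma K_iff (x y : Fm) :
    CHL (Fm.imp (Fm.box (Fm.iff x y)) (Fm.iff (Fm.box x) (Fm.box y))) := by
  have t1 : (PForm.imp (PIff (.var 0) (.var 1)) (.imp (.var 0) (.var 1))).Taut := by
    intro v; simp only [PForm.eval, PIff]; cases v 0 <;> cases v 1 <;> rfl
  have t2 : (PForm.imp (PIff (.var 0) (.var 1)) (.imp (.var 1) (.var 0))).Taut := by
    intro v; simp only [PForm.eval, PIff]; cases v 0 <;> cases v 1 <;> rfl
  have h1 : CHL (Fm.imp (Fm.box (Fm.iff x y)) (Fm.imp (Fm.box x) (Fm.box y))) :=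
    imp_trans (box_mono (CHL.taut (sV [x, y]) t1)) (CHL.k x y)
  have h2 : CHL (Fm.imp (Fm.box (Fm.iff x y)) (Fm.imp (Fm.box y) (Fm.box x))) :=
    imp_trans (box_mono (CHL.taut (sV [x, y]) t2)) (CHL.k y x)
  have t3 : (PForm.imp (.imp (.var 0) (.imp (.var 1) (.var 2)))
      (.imp (.imp (.var 0) (.imp (.var 2) (.var 1)))
        (.imp (.var 0) (PIff (.var 1) (.var 2))))).Taut := by
    intro v; simp only [PForm.eval, PIff]; cases v 0 <;> cases v 1 <;> cases v 2 <;> rfl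
  exact CHL.mp (CHL.mp (CHL.taut (sV [Fm.box (Fm.iff x y), Fm.box x, Fm.box y]) t3) h1) h2

/-- Workhorse: from `⊢ P→(u↔v)`, `⊢ x↔u`, `⊢ y↔v` conclude `⊢ P→(x↔y)`. -/
lemma W5 {P u v x y : Fm} (h : CHL (Fm.imp P (Fm.iff u v)))
    (hx : CHL (Fm.iff x u)) (hy : CHL (Fm.iff y v)) :
    CHL (Fm.imp P (Fm.iff x y)) := by
  have t : (PForm.imp (.imp (.var 0) (PIff (.var 1) (.var 2)))
      (.imp (PIff (.var 3) (.var 1)) (.imp (PIff (.var 4) (.var 2))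
        (.imp (.var 0) (PIff (.var 3) (.var 4)))))).Taut := by
    intro v; simp only [PForm.eval, PIff]
    cases v 0 <;> cases v 1 <;> cases v 2 <;> cases v 3 <;> cases v 4 <;> rfl
  exact CHL.mp (CHL.mp (CHL.mp (CHL.taut (sV [P, u, v, x, y]) t) h) hx) hy

/-- Variant of `W5` for a 1-ary connective `neg`. -/
lemma Wneg {P u v x y : Fm} (h : CHL (Fm.imp P (Fm.iff u v)))
    (hx : CHL (Fm.iff x (Fm.neg u))) (hy : CHL (Fm.iff y (Fm.neg v))) :
    CHL (Fm.imp P (Fm.iff x y)) := by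
  have t : (PForm.imp (.imp (.var 0) (PIff (.var 1) (.var 2)))
      (.imp (PIff (.var 3) (.neg (.var 1))) (.imp (PIff (.var 4) (.neg (.var 2)))
        (.imp (.var 0) (PIff (.var 3) (.var 4)))))).Taut := by
    intro v; simp only [PForm.eval, PIff]
    cases v 0 <;> cases v 1 <;> cases v 2 <;> cases v 3 <;> cases v 4 <;> rfl
  exact CHL.mp (CHL.mp (CHL.mp (CHL.taut (sV [P, u, v, x, y]) t) h) hx) hy

/-- Variant of `W5` for `and`. -/
lemma Wand {P u v u' v' x y : Fm} (h : CHL (Fm.imp P (Fm.iff u v)))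
    (h' : CHL (Fm.imp P (Fm.iff u' v')))
    (hx : CHL (Fm.iff x (Fm.and u u'))) (hy : CHL (Fm.iff y (Fm.and v v'))) :
    CHL (Fm.imp P (Fm.iff x y)) := by
  have t : (PForm.imp (.imp (.var 0) (PIff (.var 1) (.var 2)))
      (.imp (.imp (.var 0) (PIff (.var 3) (.var 4)))
      (.imp (PIff (.var 5) (.and (.var 1) (.var 3)))
      (.imp (PIff (.var 6) (.and (.var 2) (.var 4)))
        (.imp (.var 0) (PIff (.var 5) (.var 6))))))).Taut := by
    intro v; simp only [PForm.eval, PIff]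
    cases v 0 <;> cases v 1 <;> cases v 2 <;> cases v 3 <;> cases v 4 <;>
      cases v 5 <;> cases v 6 <;> rfl
  exact CHL.mp (CHL.mp (CHL.mp (CHL.mp
    (CHL.taut (sV [P, u, v, u', v', x, y]) t) h) h') hx) hy

/-- Variant of `W5` for `or`. -/
lemma Wor {P u v u' v' x y : Fm} (h : CHL (Fm.imp P (Fm.iff u v)))
    (h' : CHL (Fm.imp P (Fm.iff u' v')))
    (hx : CHL (Fm.iff x (Fm.or u u'))) (hy : CHL (Fm.iff y (Fm.or v v'))) :
    CHL (Fm.imp P (Fm.iff x y)) := by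
  have t : (PForm.imp (.imp (.var 0) (PIff (.var 1) (.var 2)))
      (.imp (.imp (.var 0) (PIff (.var 3) (.var 4)))
      (.imp (PIff (.var 5) (.or (.var 1) (.var 3)))
      (.imp (PIff (.var 6) (.or (.var 2) (.var 4)))
        (.imp (.var 0) (PIff (.var 5) (.var 6))))))).Taut := by
    intro v; simp only [PForm.eval, PIff]
    cases v 0 <;> cases v 1 <;> cases v 2 <;> cases v 3 <;> cases v 4 <;>
      cases v 5 <;> cases v 6 <;> rfl
  exact CHL.mp (CHL.mp (CHL.mp (CHL.mp
    (CHL.taut (sV [P, u, v, u', v', x, y]) t) h) h') hx) hy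

/-- Variant of `W5` for `imp`. -/
lemma Wimp {P u v u' v' x y : Fm} (h : CHL (Fm.imp P (Fm.iff u v)))
    (h' : CHL (Fm.imp P (Fm.iff u' v')))
    (hx : CHL (Fm.iff x (Fm.imp u u'))) (hy : CHL (Fm.iff y (Fm.imp v v'))) :
    CHL (Fm.imp P (Fm.iff x y)) := by
  have t : (PForm.imp (.imp (.var 0) (PIff (.var 1) (.var 2)))
      (.imp (.imp (.var 0) (PIff (.var 3) (.var 4)))
      (.imp (PIff (.var 5) (.imp (.var 1) (.var 3)))
      (.imp (PIff (.var 6) (.imp (.var 2) (.var 4)))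
        (.imp (.var 0) (PIff (.var 5) (.var 6))))))).Taut := by
    intro v; simp only [PForm.eval, PIff]
    cases v 0 <;> cases v 1 <;> cases v 2 <;> cases v 3 <;> cases v 4 <;>
      cases v 5 <;> cases v 6 <;> rfl
  exact CHL.mp (CHL.mp (CHL.mp (CHL.mp
    (CHL.taut (sV [P, u, v, u', v', x, y]) t) h) h') hx) hy

/-- Congruence of `iff` under binary connectives. -/
lemma cg_and {x x' y y' : Fm} (h1 : CHL (Fm.iff x x')) (h2 : CHL (Fm.iff y y')) :
    CHL (Fm.iff (Fm.and x y) (Fm.and x' y')) := by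
  have t : (PForm.imp (PIff (.var 0) (.var 1)) (.imp (PIff (.var 2) (.var 3))
      (PIff (.and (.var 0) (.var 2)) (.and (.var 1) (.var 3))))).Taut := by
    intro v; simp only [PForm.eval, PIff]
    cases v 0 <;> cases v 1 <;> cases v 2 <;> cases v 3 <;> rfl
  exact CHL.mp (CHL.mp (CHL.taut (sV [x, x', y, y']) t) h1) h2

lemma cg_or {x x' y y' : Fm} (h1 : CHL (Fm.iff x x')) (h2 : CHL (Fm.iff y y')) :
    CHL (Fm.iff (Fm.or x y) (Fm.or x' y')) := by
  have t : (PForm.imp (PIff (.var 0) (.var 1)) (.imp (PIff (.var 2) (.var 3))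
      (PIff (.or (.var 0) (.var 2)) (.or (.var 1) (.var 3))))).Taut := by
    intro v; simp only [PForm.eval, PIff]
    cases v 0 <;> cases v 1 <;> cases v 2 <;> cases v 3 <;> rfl
  exact CHL.mp (CHL.mp (CHL.taut (sV [x, x', y, y']) t) h1) h2

lemma cg_imp {x x' y y' : Fm} (h1 : CHL (Fm.iff x x')) (h2 : CHL (Fm.iff y y')) :
    CHL (Fm.iff (Fm.imp x y) (Fm.imp x' y')) := by
  have t : (PForm.imp (PIff (.var 0) (.var 1)) (.imp (PIff (.var 2) (.var 3))
      (PIff (.imp (.var 0) (.var 2)) (.imp (.var 1) (.var 3))))).Taut := by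
    intro v; simp only [PForm.eval, PIff]
    cases v 0 <;> cases v 1 <;> cases v 2 <;> cases v 3 <;> rfl
  exact CHL.mp (CHL.mp (CHL.taut (sV [x, x', y, y']) t) h1) h2

lemma cg_neg {x x' : Fm} (h1 : CHL (Fm.iff x x')) :
    CHL (Fm.iff (Fm.neg x) (Fm.neg x')) := by
  have t : (PForm.imp (PIff (.var 0) (.var 1))
      (PIff (.neg (.var 0)) (.neg (.var 1)))).Taut := by
    intro v; simp only [PForm.eval, PIff]; cases v 0 <;> cases v 1 <;> rfl
  exact CHL.mp (CHL.taut (sV [x, x']) t) h1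

/-- `⊢ x∧y → x`. -/
lemma andE1 (x y : Fm) : CHL (Fm.imp (Fm.and x y) x) := by
  have t : (PForm.imp (.and (.var 0) (.var 1)) (.var 0)).Taut := by
    intro v; simp only [PForm.eval]; cases v 0 <;> cases v 1 <;> rfl
  exact CHL.taut (sV [x, y]) t

lemma andE2 (x y : Fm) : CHL (Fm.imp (Fm.and x y) y) := by
  have t : (PForm.imp (.and (.var 0) (.var 1)) (.var 1)).Taut := by
    intro v; simp only [PForm.eval]; cases v 0 <;> cases v 1 <;> rfl
  exact CHL.taut (sV [x, y]) t

lemma impAnd {P x y : Fm} (h1 : CHL (Fm.imp P x)) (h2 : CHL (Fm.imp P y)) :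
    CHL (Fm.imp P (Fm.and x y)) := by
  have t : (PForm.imp (.imp (.var 0) (.var 1)) (.imp (.imp (.var 0) (.var 2))
      (.imp (.var 0) (.and (.var 1) (.var 2))))).Taut := by
    intro v; simp only [PForm.eval]; cases v 0 <;> cases v 1 <;> cases v 2 <;> rfl
  exact CHL.mp (CHL.mp (CHL.taut (sV [P, x, y]) t) h1) h2

lemma impTop (P : Fm) : CHL (Fm.imp P Fm.topFm) := by
  have t : (PForm.imp (.var 0) .top).Taut := by
    intro v; simp only [PForm.eval]; cases v 0 <;> rfl
  exact CHL.taut (sV [P]) t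

/-- Transfer along a bisimulation. -/
lemma of_bisim {x y : Fm} (hb : RGraph.Bisim x y) (h : CHL x) : CHL y :=
  ofIff (CHL.bisim hb) h

lemma iff_of_bisim {x y : Fm} (hb : RGraph.Bisim x y) : CHL (Fm.iff x y) :=
  CHL.bisim hb

end CHL

end Toolkit
section GraphLemmas
open Fm

namespace RGraph

variable {L : Type} {ar : L → ℕ}

lemma succ_congr (G : RGraph L ar) {a b : G.V} (h : a = b)
    {i : Fin (ar (G.label a))} {j : Fin (ar (G.label b))} (hij : (i : ℕ) = (j : ℕ)) :
    G.succ a i = G.succ b j := by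
  subst h
  have : i = j := Fin.ext hij
  rw [this]

end RGraph

namespace Fm

/-- A vertex of `θσ` sitting at the root of the copy attached at `a`. -/
def wv (θ : Fm) (σ : ℕ → Fm) (a : θ.V) : (θ.subst σ).V :=
  ⟨a, copyRoot σ _⟩

lemma subst_root (θ : Fm) (σ : ℕ → Fm) : (θ.subst σ).root = wv θ σ θ.root := rfl

lemma copyLabel_none {σ : ℕ → Fm} {d : FLab} {o : Option ℕ} (ho : o = none)
    (c : copyT σ o) : copyLabel σ d o c = d := by subst ho; rfl

lemma copyLabel_some {σ : ℕ → Fm} {d : FLab} {o : Option ℕ} {q : ℕ} (ho : o = some q)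
    (c : copyT σ o) {z : (σ q).V} (hc : HEq c z) : copyLabel σ d o c = (σ q).label z := by
  subst ho
  exact congrArg _ (eq_of_heq hc)

lemma copyRoot_heq {σ : ℕ → Fm} {o : Option ℕ} {q : ℕ} (ho : o = some q) :
    HEq (copyRoot σ o) (σ q).root := by subst ho; rfl

lemma copyRoot_heq_none {σ : ℕ → Fm} {o : Option ℕ} (ho : o = none) :
    HEq (copyRoot σ o) PUnit.unit := by subst ho; rfl

lemma subst_label (θ : Fm) (σ : ℕ → Fm) (a : θ.V) (b : copyT σ (varIdx (θ.label a))) :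
    (θ.subst σ).label ⟨a, b⟩ = copyLabel σ (θ.label a) (varIdx (θ.label a)) b := rfl

lemma subst_label_none (θ : Fm) (σ : ℕ → Fm) (a : θ.V)
    (hn : varIdx (θ.label a) = none) (b : copyT σ (varIdx (θ.label a))) :
    (θ.subst σ).label ⟨a, b⟩ = θ.label a :=
  copyLabel_none hn b

lemma subst_label_some (θ : Fm) (σ : ℕ → Fm) (a : θ.V) {q : ℕ}
    (hq : varIdx (θ.label a) = some q) (b : copyT σ (varIdx (θ.label a)))
    {z : (σ q).V} (hb : HEq b z) :
    (θ.subst σ).label ⟨a, b⟩ = (σ q).label z :=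
  copyLabel_some hq b hb

lemma substSucc_eq_none (θ : Fm) (σ : ℕ → Fm) (a : θ.V) {o : Option ℕ}
    (h : o = varIdx (θ.label a)) (ho : o = none) (b : copyT σ o)
    (i : Fin (copyLabel σ (θ.label a) o b).ar)
    (e : (copyLabel σ (θ.label a) o b).ar = (θ.label a).ar) :
    substSucc θ σ a o h b i = ⟨θ.succ a (Fin.cast e i), copyRoot σ _⟩ := by
  subst ho; rfl

lemma substSucc_eq_some (θ : Fm) (σ : ℕ → Fm) (a : θ.V) {o : Option ℕ} {q : ℕ}
    (h : o = varIdx (θ.label a)) (ho : o = some q) (b : copyT σ o)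
    {z : (σ q).V} (hb : HEq b z)
    (i : Fin (copyLabel σ (θ.label a) o b).ar)
    (e : (copyLabel σ (θ.label a) o b).ar = ((σ q).label z).ar)
    (E : (σ q).V = copyT σ (varIdx (θ.label a))) :
    substSucc θ σ a o h b i = ⟨a, cast E ((σ q).succ z (Fin.cast e i))⟩ := by
  subst ho
  have hb' : b = z := eq_of_heq hb
  subst hb'
  apply Sigma.ext
  · rfl
  · simp only
    exact HEq.trans (cast_heq _ _) (HEq.symm (cast_heq _ _))

lemma subst_succ (θ : Fm) (σ : ℕ → Fm) (a : θ.V) (b : copyT σ (varIdx (θ.label a)))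
    (i : Fin ((θ.subst σ).label ⟨a, b⟩).ar) :
    (θ.subst σ).succ ⟨a, b⟩ i = substSucc θ σ a (varIdx (θ.label a)) rfl b i := rfl

lemma subst_succ_none (θ : Fm) (σ : ℕ → Fm) (a : θ.V)
    (hn : varIdx (θ.label a) = none) (b : copyT σ (varIdx (θ.label a)))
    (i : Fin ((θ.subst σ).label ⟨a, b⟩).ar)
    (e : ((θ.subst σ).label ⟨a, b⟩).ar = (θ.label a).ar) :
    (θ.subst σ).succ ⟨a, b⟩ i = ⟨θ.succ a (Fin.cast e i), copyRoot σ _⟩ :=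
  substSucc_eq_none θ σ a rfl hn b i e

lemma subst_succ_some (θ : Fm) (σ : ℕ → Fm) (a : θ.V) {q : ℕ}
    (hq : varIdx (θ.label a) = some q) (b : copyT σ (varIdx (θ.label a)))
    {z : (σ q).V} (hb : HEq b z)
    (i : Fin ((θ.subst σ).label ⟨a, b⟩).ar)
    (e : ((θ.subst σ).label ⟨a, b⟩).ar = ((σ q).label z).ar)
    (E : (σ q).V = copyT σ (varIdx (θ.label a))) :
    (θ.subst σ).succ ⟨a, b⟩ i = ⟨a, cast E ((σ q).succ z (Fin.cast e i))⟩ :=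
  substSucc_eq_some θ σ a rfl hq b hb i e E

/-- `varIdx` is `none` on non-variable labels. -/
lemma varIdx_eq_none {l : FLab} (h : ∀ q, l ≠ .var q) : varIdx l = none := by
  cases l <;> first | rfl | exact absurd rfl (h _)

end Fm

end GraphLemmas
section BisimLemmas
open Fm RGraph

namespace Fm

/-- Restriction at the root is bisimilar to the whole graph. -/
lemma bisim_restrict_root (G : Fm) : Bisim (G.restrict G.root) G := by
  refine ⟨fun y z => y.1 = z, ?_, rfl⟩
  rintro y z (h : y.1 = z)
  refine ⟨congrArg G.label h, fun i => ?_⟩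
  exact G.succ_congr h rfl

/-- No vertex other than `x` is reachable from a 0-ary vertex `x`. -/
lemma reach_eq_of_ar_zero (G : Fm) (x : G.V) (h0 : (G.label x).ar = 0) {y : G.V}
    (h : Relation.ReflTransGen G.Edge x y) : y = x := by
  induction h using Relation.ReflTransGen.head_induction_on with
  | refl => rfl
  | head he _ _ =>
      obtain ⟨i, _⟩ := he
      exact absurd i.2 (by omega)

/-- Local unfolding of `restrict` at a 0-ary vertex. -/
lemma bisim_restrict0 (G : Fm) (x : G.V) (l : FLab) (hl : G.label x = l)
    (h0 : l.ar = 0) : Bisim (G.restrict x) (ofLab0 l) := by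
  refine ⟨fun y _ => y.1 = x, ?_, rfl⟩
  rintro y z (h : y.1 = x)
  refine ⟨by simpa [restrict, ofLab0, h] using hl, fun i => ?_⟩
  have : ((G.restrict x).label y).ar = 0 := by
    show (G.label y.1).ar = 0
    rw [h, hl, h0]
  exact absurd i.2 (by omega)

/-- Local unfolding of `restrict` at a 1-ary vertex. -/
lemma bisim_restrict1 (G : Fm) (x : G.V) (l : FLab) (hl : G.label x = l)
    (h1 : l.ar = 1) (i0 : Fin (FLab.ar (G.label x))) :
    Bisim (G.restrict x) (ofLab1 l (G.restrict (G.succ x i0))) := by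
  classical
  refine ⟨fun y z => (z = none ∧ y.1 = x) ∨ (∃ w, z = some w ∧ y.1 = w.1), ?_, Or.inl ⟨rfl, rfl⟩⟩
  rintro y z (⟨rfl, hy⟩ | ⟨w, rfl, hy⟩)
  · refine ⟨by simpa [restrict, ofLab1, lab1, hy] using hl, fun i => ?_⟩
    refine Or.inr ⟨(G.restrict (G.succ x i0)).root, rfl, ?_⟩
    show G.succ y.1 i = G.succ x i0
    apply G.succ_congr hy
    have hi : (i : ℕ) < 1 := by
      have := i.2
      simpa [restrict, hy, hl, h1] using this
    have hi0 : (i0 : ℕ) < 1 := by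
      have := i0.2
      simpa [hl, h1] using this
    omega
  · refine ⟨by simp [restrict, ofLab1, lab1, hy], fun i => ?_⟩
    refine Or.inr ⟨_, rfl, ?_⟩
    show G.succ y.1 i = G.succ w.1 _
    exact G.succ_congr hy rfl

/-- Local unfolding of `restrict` at a 2-ary vertex. -/
lemma bisim_restrict2 (G : Fm) (x : G.V) (l : FLab) (hl : G.label x = l)
    (h2 : l.ar = 2) (i0 i1 : Fin (FLab.ar (G.label x))) (hi0 : (i0 : ℕ) = 0)
    (hi1 : (i1 : ℕ) = 1) :
    Bisim (G.restrict x)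
      (ofLab2 l (G.restrict (G.succ x i0)) (G.restrict (G.succ x i1))) := by
  classical
  refine ⟨fun y z => (z = none ∧ y.1 = x) ∨
    (∃ w, z = some (Sum.inl w) ∧ y.1 = w.1) ∨
    (∃ w, z = some (Sum.inr w) ∧ y.1 = w.1), ?_, Or.inl ⟨rfl, rfl⟩⟩
  rintro y z (⟨rfl, hy⟩ | ⟨w, rfl, hy⟩ | ⟨w, rfl, hy⟩)
  · refine ⟨by simpa [restrict, ofLab2, lab2, hy] using hl, fun i => ?_⟩
    have hi : (i : ℕ) < 2 := by
      have := i.2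
      simpa [restrict, hy, hl, h2] using this
    by_cases hc : (i : ℕ) = 0
    · refine Or.inr (Or.inl ⟨(G.restrict (G.succ x i0)).root, ?_, ?_⟩)
      · simp [ofLab2, hc]
        exact hc
      · show G.succ y.1 i = G.succ x i0
        exact G.succ_congr hy (by omega)
    · refine Or.inr (Or.inr ⟨(G.restrict (G.succ x i1)).root, ?_, ?_⟩)
      · simp [ofLab2, hc]
        exact hc
      · show G.succ y.1 i = G.succ x i1
        exact G.succ_congr hy (by omega)
  · refine ⟨by simp [restrict, ofLab2, lab2, hy], fun i => ?_⟩
    refine Or.inr (Or.inl ⟨_, rfl, ?_⟩)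
    show G.succ y.1 i = G.succ w.1 _
    exact G.succ_congr hy rfl
  · refine ⟨by simp [restrict, ofLab2, lab2, hy], fun i => ?_⟩
    refine Or.inr (Or.inr ⟨_, rfl, ?_⟩)
    show G.succ y.1 i = G.succ w.1 _
    exact G.succ_congr hy rfl

end Fm

end BisimLemmas
section BisimLemmas2
open Fm RGraph

namespace RGraph

lemma root_heq {L : Type} {ar : L → ℕ} {G H : RGraph L ar} (e : G = H) :
    HEq G.root H.root := by subst e; rfl

lemma label_eq_of_eq {L : Type} {ar : L → ℕ} {G H : RGraph L ar} (e : G = H)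
    (x : G.V) {y : H.V} (hxy : HEq x y) : G.label x = H.label y := by
  subst e
  rw [eq_of_heq hxy]

lemma succ_heq {L : Type} {ar : L → ℕ} {G H : RGraph L ar} (e : G = H)
    {x : G.V} {y : H.V} (hxy : HEq x y) {i : Fin (ar (G.label x))}
    {j : Fin (ar (H.label y))} (hij : (i : ℕ) = (j : ℕ)) :
    HEq (G.succ x i) (H.succ y j) := by
  subst e
  have hx : x = y := eq_of_heq hxy
  subst hx
  rw [Fin.ext hij]

end RGraph

namespace Fm

lemma varIdx_eq_some {l : FLab} {q : ℕ} : varIdx l = some q ↔ l = .var q := by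
  cases l <;> simp [varIdx]

lemma copyT_some {σ : ℕ → Fm} {o : Option ℕ} {q : ℕ} (ho : o = some q) :
    copyT σ o = (σ q).V := by subst ho; rfl

/-- The copy of `σ q` hanging at a `q`-occurrence, as a restriction, is
bisimilar to `σ q`. -/
lemma bisim_subst_copy (θ : Fm) (σ : ℕ → Fm) (a : θ.V) {q : ℕ}
    (hq : θ.label a = .var q) :
    Bisim ((θ.subst σ).restrict (wv θ σ a)) (σ q) := by
  refine ⟨fun y z => y.1.1 = a ∧ HEq y.1.2 z, ?_,  rfl,
    copyRoot_heq (varIdx_eq_some.2 hq)⟩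
  rintro ⟨⟨y1, y2⟩, hr⟩ z ⟨hy1, hy2⟩
  have hy1' : y1 = a := hy1
  subst hy1'
  have hv : varIdx (θ.label y1) = some q := varIdx_eq_some.2 hq
  have hl : ((θ.subst σ).restrict (wv θ σ y1)).label ⟨⟨y1, y2⟩, hr⟩ = (σ q).label z :=
    copyLabel_some hv y2 hy2
  refine ⟨hl, fun i => ?_⟩
  have e : ((θ.subst σ).label ⟨y1, y2⟩).ar = ((σ q).label z).ar :=
    congrArg FLab.ar hl
  have E : (σ q).V = copyT σ (varIdx (θ.label y1)) := (copyT_some hv).symm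
  constructor
  · show ((θ.subst σ).succ ⟨y1, y2⟩ _).1 = y1
    erw [subst_succ_some θ σ y1 hv y2 hy2 _ e E]
  · show HEq ((θ.subst σ).succ ⟨y1, y2⟩ _).2 _
    erw [subst_succ_some θ σ y1 hv y2 hy2 _ e E]
    exact HEq.trans (cast_heq _ _) (heq_of_eq ((σ q).succ_congr rfl rfl))

/-- Unfolding the fixed point: `Ϝp.φ` is bisimilar to `φ[p:=Ϝp.φ]`. -/
lemma bisim_fix (φ : Fm) (p : ℕ) (h : φ.label φ.root ≠ .var p) (σ : ℕ → Fm)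
    (hσ : σ p = φ.fix p h) (hσ' : ∀ q, q ≠ p → σ q = varFm q) :
    Bisim (φ.fix p h) (φ.subst σ) := by
  classical
  refine ⟨fun x y => (∃ _ : φ.label y.1 ≠ .var p, x.1 = y.1) ∨
    (φ.label y.1 = .var p ∧ HEq y.2 x), ?_, Or.inl ⟨h, rfl⟩⟩
  rintro x ⟨y1, y2⟩ (⟨hy, hx⟩ | ⟨hy, hy2⟩)
  · by_cases hvar : ∃ q, φ.label y1 = .var q
    · -- a variable `q ≠ p`: a leaf
      obtain ⟨q, hq⟩ := hvar
      have hqp : q ≠ p := fun hc => hy (hc ▸ hq)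
      have hv : varIdx (φ.label y1) = some q := varIdx_eq_some.2 hq
      have eσ : σ q = varFm q := hσ' q hqp
      set z : (σ q).V := cast (copyT_some hv) y2 with hz
      have hyz : HEq y2 z := (cast_heq _ _).symm
      have hl2 : (φ.subst σ).label ⟨y1, y2⟩ = .var q := by
        rw [subst_label_some φ σ y1 hv y2 hyz]
        rw [label_eq_of_eq eσ z
          ((cast_heq (congrArg RGraph.V eσ) z).symm : HEq z (cast (congrArg RGraph.V eσ) z))]
        rfl
      have hl1 : (φ.fix p h).label x = .var q := by
        show φ.label x.1 = .var q
        rw [hx, hq]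
      refine ⟨hl1.trans hl2.symm, fun i => ?_⟩
      obtain ⟨iv, hlt⟩ := i
      rw [hl1] at hlt
      exact absurd hlt (Nat.not_lt_zero _)
    · -- a non-variable label
      push_neg at hvar
      have hv : varIdx (φ.label y1) = none := varIdx_eq_none hvar
      have hl2 : (φ.subst σ).label ⟨y1, y2⟩ = φ.label y1 := subst_label_none φ σ y1 hv y2
      have hl1 : (φ.fix p h).label x = φ.label y1 := by
        show φ.label x.1 = φ.label y1
        rw [hx]
      refine ⟨hl1.trans hl2.symm, fun i => ?_⟩
      have e : ((φ.subst σ).label ⟨y1, y2⟩).ar = (φ.label y1).ar := congrArg FLab.ar hl2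
      rw [subst_succ_none φ σ y1 hv y2 _ e]
      set s := φ.succ y1 (Fin.cast e (Fin.cast (congrArg FLab.ar (hl1.trans hl2.symm)) i)) with hs
      have hxs : φ.succ x.1 i = s := φ.succ_congr hx rfl
      by_cases hb : φ.label s = .var p
      · refine Or.inr ⟨hb, ?_⟩
        have hfix : (φ.fix p h).succ x i = ⟨φ.root, h⟩ := dif_pos (by rw [hxs]; exact hb)
        rw [hfix]
        exact HEq.trans (copyRoot_heq (varIdx_eq_some.2 hb)) (root_heq hσ)
      · refine Or.inl ⟨hb, ?_⟩
        have hfix : (φ.fix p h).succ x i = ⟨φ.succ x.1 i, by rw [hxs]; exact hb⟩ :=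
          dif_neg (by rw [hxs]; exact hb)
        rw [hfix]
        exact hxs
  · -- inside the copy of `σ p = Ϝp.φ`
    have hv : varIdx (φ.label y1) = some p := varIdx_eq_some.2 hy
    set z : (σ p).V := cast (copyT_some hv) y2 with hz
    have hyz : HEq y2 z := (cast_heq _ _).symm
    have hzx : HEq z x := (cast_heq _ _).trans hy2
    have hl2 : (φ.subst σ).label ⟨y1, y2⟩ = (σ p).label z :=
      subst_label_some φ σ y1 hv y2 hyz
    have hl1 : (σ p).label z = (φ.fix p h).label x := label_eq_of_eq hσ z hzx
    refine ⟨(hl1.trans (by rfl)).symm.trans hl2.symm, fun i => ?_⟩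
    have e : ((φ.subst σ).label ⟨y1, y2⟩).ar = ((σ p).label z).ar := congrArg FLab.ar hl2
    have E : (σ p).V = copyT σ (varIdx (φ.label y1)) := (copyT_some hv).symm
    rw [subst_succ_some φ σ y1 hv y2 hyz _ e E]
    refine Or.inr ⟨hy, ?_⟩
    exact HEq.trans (cast_heq _ _) (succ_heq hσ hzx rfl)

end Fm

end BisimLemmas2
section BisimLemmas3
open Fm RGraph

namespace Fm

lemma copyLabel_congr {σ : ℕ → Fm} {d d' : FLab} {o o' : Option ℕ}
    (hd : d = d') (ho : o = o') {c : copyT σ o} {c' : copyT σ o'}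
    (hc : HEq c c') : copyLabel σ d o c = copyLabel σ d' o' c' := by
  subst hd; subst ho; rw [eq_of_heq hc]

lemma copyRoot_congr {σ : ℕ → Fm} {o o' : Option ℕ} (ho : o = o') :
    HEq (copyRoot σ o) (copyRoot σ o') := by subst ho; rfl

/-- Strong homomorphisms `j : α → θ` induce a bisimulation between the
copy of `ασ` inside `θσ` (as a restriction at `j(root)`) and `ασ`. -/
lemma bisim_subst_emb (θ α : Fm) (σ : ℕ → Fm) (j : α.V → θ.V)
    (hl : ∀ a, θ.label (j a) = α.label a)
    (hs : ∀ (a : α.V) (i : Fin (FLab.ar (θ.label (j a)))) (i' : Fin (FLab.ar (α.label a))),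
      (i : ℕ) = (i' : ℕ) → θ.succ (j a) i = j (α.succ a i'))
    (E : copyT σ (varIdx (α.label α.root)) = copyT σ (varIdx (θ.label (j α.root)))) :
    Bisim ((θ.subst σ).restrict
      ⟨j α.root, cast E (copyRoot σ (varIdx (α.label α.root)))⟩) (α.subst σ) := by
  refine ⟨fun y z => y.1.1 = j z.1 ∧ HEq y.1.2 z.2, ?_, rfl, ?_⟩
  swap
  · show HEq (cast E _) _
    exact cast_heq _ _
  rintro ⟨⟨y1, y2⟩, hr⟩ ⟨a, b'⟩ ⟨h1, h2⟩
  have h1' : y1 = j a := h1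
  subst h1'
  have h2' : HEq y2 b' := h2
  have hll : θ.label (j a) = α.label a := hl a
  have hlab : ((θ.subst σ).restrict _).label ⟨⟨j a, y2⟩, hr⟩ =
      (α.subst σ).label ⟨a, b'⟩ :=
    copyLabel_congr hll (congrArg varIdx hll) h2'
  refine ⟨hlab, fun i => ?_⟩
  rcases hva : varIdx (α.label a) with _ | q
  · -- non-variable label
    have hvθ : varIdx (θ.label (j a)) = none := by rw [hll, hva]
    have e : ((θ.subst σ).label ⟨j a, y2⟩).ar = (θ.label (j a)).ar :=
      congrArg FLab.ar (subst_label_none θ σ (j a) hvθ y2)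
    have e' : ((α.subst σ).label ⟨a, b'⟩).ar = (α.label a).ar :=
      congrArg FLab.ar (subst_label_none α σ a hva b')
    constructor
    · show ((θ.subst σ).succ ⟨j a, y2⟩ _).1 = _
      erw [subst_succ_none θ σ (j a) hvθ y2 _ e,
        subst_succ_none α σ a hva b' _ e']
      exact hs a _ _ rfl
    · show HEq ((θ.subst σ).succ ⟨j a, y2⟩ _).2 _
      erw [subst_succ_none θ σ (j a) hvθ y2 _ e,
        subst_succ_none α σ a hva b' _ e']
      refine copyRoot_congr ?_
      rw [hs a (Fin.cast e _) (Fin.cast e' (Fin.cast (congrArg FLab.ar hlab) i)) rfl,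
        hl]
  · -- a variable label
    have hvθ : varIdx (θ.label (j a)) = some q := by rw [hll, hva]
    set z : (σ q).V := cast (copyT_some hvθ) y2 with hz
    set z' : (σ q).V := cast (copyT_some hva) b' with hz'
    have hyz : HEq y2 z := (cast_heq _ _).symm
    have hyz' : HEq b' z' := (cast_heq _ _).symm
    have hzz : z = z' := by
      refine eq_of_heq (HEq.trans (cast_heq _ _) (HEq.trans h2' hyz'))
    have e : ((θ.subst σ).label ⟨j a, y2⟩).ar = ((σ q).label z).ar :=
      congrArg FLab.ar (subst_label_some θ σ (j a) hvθ y2 hyz)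
    have e' : ((α.subst σ).label ⟨a, b'⟩).ar = ((σ q).label z').ar :=
      congrArg FLab.ar (subst_label_some α σ a hva b' hyz')
    have E1 : (σ q).V = copyT σ (varIdx (θ.label (j a))) := (copyT_some hvθ).symm
    have E2 : (σ q).V = copyT σ (varIdx (α.label a)) := (copyT_some hva).symm
    constructor
    · show ((θ.subst σ).succ ⟨j a, y2⟩ _).1 = _
      erw [subst_succ_some θ σ (j a) hvθ y2 hyz _ e E1,
        subst_succ_some α σ a hva b' hyz' _ e' E2]
    · show HEq ((θ.subst σ).succ ⟨j a, y2⟩ _).2 _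
      erw [subst_succ_some θ σ (j a) hvθ y2 hyz _ e E1,
        subst_succ_some α σ a hva b' hyz' _ e' E2]
      refine HEq.trans (cast_heq _ _) (HEq.trans ?_ (cast_heq _ _).symm)
      exact heq_of_eq ((σ q).succ_congr hzz rfl)

/-- Substitution into a 0-ary connective graph. -/
lemma bisim_subst_lab0 (l : FLab) (hv : varIdx l = none) (σ : ℕ → Fm) :
    Bisim ((ofLab0 l).subst σ) (ofLab0 l) := by
  refine ⟨fun _ _ => True, ?_, trivial⟩
  rintro ⟨a, b⟩ z -
  have hlab : ((ofLab0 l).subst σ).label ⟨a, b⟩ = l :=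
    subst_label_none (ofLab0 l) σ a hv b
  exact ⟨hlab, fun _ => trivial⟩

/-- Substitution into a variable graph. -/
lemma bisim_subst_var (q : ℕ) (σ : ℕ → Fm) :
    Bisim ((varFm q).subst σ) (σ q) := by
  refine ⟨fun x z => HEq x.2 z, ?_, ?_⟩
  swap
  · show HEq (((varFm q).subst σ).root).2 (σ q).root
    exact copyRoot_heq rfl
  rintro ⟨a, b⟩ z hb
  have hv : varIdx ((varFm q).label a) = some q := rfl
  have hlab : ((varFm q).subst σ).label ⟨a, b⟩ = (σ q).label z :=
    subst_label_some (varFm q) σ a hv b hb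
  refine ⟨hlab, fun i => ?_⟩
  have e : (((varFm q).subst σ).label ⟨a, b⟩).ar = ((σ q).label z).ar :=
    congrArg FLab.ar hlab
  have E : (σ q).V = copyT σ (varIdx ((varFm q).label a)) := (copyT_some hv).symm
  show HEq (((varFm q).subst σ).succ ⟨a, b⟩ _).2 _
  rw [subst_succ_some (varFm q) σ a hv b hb _ e E]
  show HEq (cast E ((σ q).succ z (Fin.cast e i)))
    ((σ q).succ z (Fin.cast (congrArg FLab.ar hlab) i))
  exact (cast_heq _ _).trans (heq_of_eq ((σ q).succ_congr rfl rfl))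

end Fm

end BisimLemmas3
section SubstClosure
open Fm RGraph

namespace Fm

/-- Bisimilarity is preserved by substitution. -/
lemma bisim_subst {φ ψ : Fm} (σ : ℕ → Fm) (h : Bisim φ ψ) :
    Bisim (φ.subst σ) (ψ.subst σ) := by
  obtain ⟨R, hR, hroot⟩ := h
  refine ⟨fun x y => ∃ _ : R x.1 y.1, HEq x.2 y.2, ?_, hroot, ?_⟩
  swap
  · exact copyRoot_congr (congrArg varIdx (hR _ _ hroot).1)
  rintro ⟨a, b⟩ ⟨a', b'⟩ ⟨hraa, hbb⟩
  obtain ⟨hlab0, hsucc⟩ := hR a a' hraa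
  have hbb' : HEq b b' := hbb
  have hlab : (φ.subst σ).label ⟨a, b⟩ = (ψ.subst σ).label ⟨a', b'⟩ :=
    copyLabel_congr hlab0 (congrArg varIdx hlab0) hbb'
  refine ⟨hlab, fun i => ?_⟩
  rcases hva : varIdx (φ.label a) with _ | q
  · have hvψ : varIdx (ψ.label a') = none := by rw [← hlab0, hva]
    have e : ((φ.subst σ).label ⟨a, b⟩).ar = (φ.label a).ar :=
      congrArg FLab.ar (subst_label_none φ σ a hva b)
    have e' : ((ψ.subst σ).label ⟨a', b'⟩).ar = (ψ.label a').ar :=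
      congrArg FLab.ar (subst_label_none ψ σ a' hvψ b')
    rw [subst_succ_none φ σ a hva b _ e,
      subst_succ_none ψ σ a' hvψ b' _ e']
    have hnext := hsucc (Fin.cast e i)
    have hre : ψ.succ a' (Fin.cast (congrArg FLab.ar hlab0) (Fin.cast e i)) =
        ψ.succ a' (Fin.cast e' (Fin.cast (congrArg FLab.ar hlab) i)) :=
      ψ.succ_congr rfl rfl
    rw [hre] at hnext
    exact ⟨hnext, copyRoot_congr (congrArg varIdx (hR _ _ hnext).1)⟩
  · have hvψ : varIdx (ψ.label a') = some q := by rw [← hlab0, hva]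
    set z : (σ q).V := cast (copyT_some hva) b with hz
    set z' : (σ q).V := cast (copyT_some hvψ) b' with hz'
    have hyz : HEq b z := (cast_heq _ _).symm
    have hyz' : HEq b' z' := (cast_heq _ _).symm
    have hzz : z = z' := eq_of_heq ((cast_heq _ _).trans (hbb'.trans hyz'))
    have e : ((φ.subst σ).label ⟨a, b⟩).ar = ((σ q).label z).ar :=
      congrArg FLab.ar (subst_label_some φ σ a hva b hyz)
    have e' : ((ψ.subst σ).label ⟨a', b'⟩).ar = ((σ q).label z').ar :=
      congrArg FLab.ar (subst_label_some ψ σ a' hvψ b' hyz')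
    have E1 : (σ q).V = copyT σ (varIdx (φ.label a)) := (copyT_some hva).symm
    have E2 : (σ q).V = copyT σ (varIdx (ψ.label a')) := (copyT_some hvψ).symm
    rw [subst_succ_some φ σ a hva b hyz _ e E1,
      subst_succ_some ψ σ a' hvψ b' hyz' _ e' E2]
    refine ⟨hraa, ?_⟩
    refine (cast_heq _ _).trans (HEq.trans ?_ (cast_heq _ _).symm)
    exact heq_of_eq ((σ q).succ_congr hzz rfl)

/-- Congruence for 1-ary connectives. -/
lemma cg_lab1 {l : FLab} (h1 : FLab.ar l = 1) {x y : Fm} (hxy : CHL (Fm.iff x y)) :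
    CHL (Fm.iff (ofLab1 l x) (ofLab1 l y)) := by
  cases l
  case neg => exact CHL.cg_neg hxy
  case box => exact CHL.box_iff hxy
  all_goals simp [FLab.ar] at h1

/-- Congruence for 2-ary connectives. -/
lemma cg_lab2 {l : FLab} (h2 : FLab.ar l = 2) {x x' y y' : Fm}
    (hx : CHL (Fm.iff x x')) (hy : CHL (Fm.iff y y')) :
    CHL (Fm.iff (ofLab2 l x y) (ofLab2 l x' y')) := by
  cases l
  case and => exact CHL.cg_and hx hy
  case or => exact CHL.cg_or hx hy
  case imp => exact CHL.cg_imp hx hy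
  all_goals simp [FLab.ar] at h2

/-- `⊢ (l φ)σ ↔ l (φσ)` for 1-ary `l`. -/
lemma chl_subst_lab1 (l : FLab) (hv : varIdx l = none) (h1 : FLab.ar l = 1)
    (α : Fm) (σ : ℕ → Fm) :
    CHL (Fm.iff ((ofLab1 l α).subst σ) (ofLab1 l (α.subst σ))) := by
  set θ := ofLab1 l α with hθ
  set G := θ.subst σ with hG
  have hv0 : varIdx (θ.label θ.root) = none := hv
  have hl0 : G.label G.root = l := subst_label_none θ σ θ.root hv0 _
  have t1 : CHL (Fm.iff G (G.restrict G.root)) :=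
    CHL.iff_symm (CHL.iff_of_bisim (bisim_restrict_root G))
  let i0 : Fin (FLab.ar (G.label G.root)) := ⟨0, by rw [hl0, h1]; omega⟩
  have t2 : Bisim (G.restrict G.root) (ofLab1 l (G.restrict (G.succ G.root i0))) :=
    bisim_restrict1 G G.root l hl0 h1 i0
  have E : copyT σ (varIdx (α.label α.root)) =
      copyT σ (varIdx (θ.label (some α.root))) := rfl
  have e0 : (G.label G.root).ar = (θ.label θ.root).ar :=
    congrArg FLab.ar (subst_label_none θ σ θ.root hv0 _)
  have hsucc : G.succ G.root i0 =
      ⟨(some α.root : Option α.V), cast E (copyRoot σ (varIdx (α.label α.root)))⟩ := by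
    show (θ.subst σ).succ ⟨θ.root, copyRoot σ (varIdx (θ.label θ.root))⟩ i0 = _
    rw [subst_succ_none θ σ θ.root hv0 _ i0 e0]
    rfl
  have t3 : Bisim (G.restrict (G.succ G.root i0)) (α.subst σ) := by
    rw [hsucc]
    exact bisim_subst_emb θ α σ (fun a => some a) (fun a => rfl)
      (fun a i i' hii => congrArg some (α.succ_congr rfl hii)) E
  refine CHL.iff_trans (CHL.iff_trans t1 (CHL.iff_of_bisim t2)) ?_
  exact cg_lab1 h1 (CHL.iff_of_bisim t3)

/-- `⊢ (l φ ψ)σ ↔ l (φσ) (ψσ)` for 2-ary `l`. -/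
lemma chl_subst_lab2 (l : FLab) (hv : varIdx l = none) (h2 : FLab.ar l = 2)
    (α β : Fm) (σ : ℕ → Fm) :
    CHL (Fm.iff ((ofLab2 l α β).subst σ) (ofLab2 l (α.subst σ) (β.subst σ))) := by
  set θ := ofLab2 l α β with hθ
  set G := θ.subst σ with hG
  have hv0 : varIdx (θ.label θ.root) = none := hv
  have hl0 : G.label G.root = l := subst_label_none θ σ θ.root hv0 _
  have t1 : CHL (Fm.iff G (G.restrict G.root)) :=
    CHL.iff_symm (CHL.iff_of_bisim (bisim_restrict_root G))
  let i0 : Fin (FLab.ar (G.label G.root)) := ⟨0, by rw [hl0, h2]; omega⟩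
  let i1 : Fin (FLab.ar (G.label G.root)) := ⟨1, by rw [hl0, h2]; omega⟩
  have t2 : Bisim (G.restrict G.root)
      (ofLab2 l (G.restrict (G.succ G.root i0)) (G.restrict (G.succ G.root i1))) :=
    bisim_restrict2 G G.root l hl0 h2 i0 i1 rfl rfl
  have e0 : (G.label G.root).ar = (θ.label θ.root).ar :=
    congrArg FLab.ar (subst_label_none θ σ θ.root hv0 _)
  have EA : copyT σ (varIdx (α.label α.root)) =
      copyT σ (varIdx (θ.label (some (Sum.inl α.root)))) := rfl
  have EB : copyT σ (varIdx (β.label β.root)) =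
      copyT σ (varIdx (θ.label (some (Sum.inr β.root)))) := rfl
  have hsucc0 : G.succ G.root i0 =
      ⟨(some (Sum.inl α.root) : Option (α.V ⊕ β.V)),
        cast EA (copyRoot σ (varIdx (α.label α.root)))⟩ := by
    show (θ.subst σ).succ ⟨θ.root, copyRoot σ (varIdx (θ.label θ.root))⟩ i0 = _
    rw [subst_succ_none θ σ θ.root hv0 _ i0 e0]
    rfl
  have hsucc1 : G.succ G.root i1 =
      ⟨(some (Sum.inr β.root) : Option (α.V ⊕ β.V)),
        cast EB (copyRoot σ (varIdx (β.label β.root)))⟩ := by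
    show (θ.subst σ).succ ⟨θ.root, copyRoot σ (varIdx (θ.label θ.root))⟩ i1 = _
    rw [subst_succ_none θ σ θ.root hv0 _ i1 e0]
    rfl
  have t3 : Bisim (G.restrict (G.succ G.root i0)) (α.subst σ) := by
    rw [hsucc0]
    exact bisim_subst_emb θ α σ (fun a => some (Sum.inl a)) (fun a => rfl)
      (fun a i i' hii => congrArg (fun c => some (Sum.inl c)) (α.succ_congr rfl hii)) EA
  have t4 : Bisim (G.restrict (G.succ G.root i1)) (β.subst σ) := by
    rw [hsucc1]
    exact bisim_subst_emb θ β σ (fun b => some (Sum.inr b)) (fun b => rfl)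
      (fun b i i' hii => congrArg (fun c => some (Sum.inr c)) (β.succ_congr rfl hii)) EB
  refine CHL.iff_trans (CHL.iff_trans t1 (CHL.iff_of_bisim t2)) ?_
  exact cg_lab2 h2 (CHL.iff_of_bisim t3) (CHL.iff_of_bisim t4)

/-- Composition of a parse-tree substitution with a graph substitution. -/
lemma chl_substFm (A : PForm) (τ σ : ℕ → Fm) :
    CHL (Fm.iff ((A.substFm τ).subst σ) (A.substFm (fun n => (τ n).subst σ))) := by
  induction A with
  | var n => exact CHL.iff_refl _
  | top => exact CHL.iff_of_bisim (bisim_subst_lab0 .top rfl σ)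
  | bot => exact CHL.iff_of_bisim (bisim_subst_lab0 .bot rfl σ)
  | neg A ihA =>
      exact CHL.iff_trans (chl_subst_lab1 .neg rfl rfl _ σ) (CHL.cg_neg ihA)
  | and A B ihA ihB =>
      exact CHL.iff_trans (chl_subst_lab2 .and rfl rfl _ _ σ) (CHL.cg_and ihA ihB)
  | or A B ihA ihB =>
      exact CHL.iff_trans (chl_subst_lab2 .or rfl rfl _ _ σ) (CHL.cg_or ihA ihB)
  | imp A B ihA ihB =>
      exact CHL.iff_trans (chl_subst_lab2 .imp rfl rfl _ _ σ) (CHL.cg_imp ihA ihB)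

/-- `CHL` is closed under substitution. -/
theorem chl_subst_closed (σ : ℕ → Fm) {θ : Fm} (h : CHL θ) : CHL (θ.subst σ) := by
  induction h with
  | @mp φ ψ _ _ ih1 ih2 =>
      exact CHL.mp (CHL.ofIff (chl_subst_lab2 .imp rfl rfl φ ψ σ) ih1) ih2
  | @nec φ _ ih =>
      exact CHL.ofIff (CHL.iff_symm (chl_subst_lab1 .box rfl rfl φ σ)) (CHL.nec ih)
  | @taut A τ hA =>
      exact CHL.ofIff (CHL.iff_symm (chl_substFm A τ σ))
        (CHL.taut (fun n => (τ n).subst σ) hA)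
  | k φ ψ =>
      have h1 : CHL (Fm.iff ((Fm.box (Fm.imp φ ψ)).subst σ)
          (Fm.box (Fm.imp (φ.subst σ) (ψ.subst σ)))) :=
        CHL.iff_trans (chl_subst_lab1 .box rfl rfl _ σ)
          (CHL.box_iff (chl_subst_lab2 .imp rfl rfl φ ψ σ))
      have h2 : CHL (Fm.iff ((Fm.imp (Fm.box φ) (Fm.box ψ)).subst σ)
          (Fm.imp (Fm.box (φ.subst σ)) (Fm.box (ψ.subst σ)))) :=
        CHL.iff_trans (chl_subst_lab2 .imp rfl rfl _ _ σ)
          (CHL.cg_imp (chl_subst_lab1 .box rfl rfl φ σ) (chl_subst_lab1 .box rfl rfl ψ σ))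
      have h3 : CHL (Fm.iff ((Fm.imp (Fm.box (Fm.imp φ ψ)) (Fm.imp (Fm.box φ) (Fm.box ψ))).subst σ)
          (Fm.imp (Fm.box (Fm.imp (φ.subst σ) (ψ.subst σ)))
            (Fm.imp (Fm.box (φ.subst σ)) (Fm.box (ψ.subst σ))))) :=
        CHL.iff_trans (chl_subst_lab2 .imp rfl rfl _ _ σ) (CHL.cg_imp h1 h2)
      exact CHL.ofIff (CHL.iff_symm h3) (CHL.k (φ.subst σ) (ψ.subst σ))
  | @bisim φ ψ hb =>
      have h3 : CHL (Fm.iff ((Fm.iff φ ψ).subst σ)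
          (Fm.iff (φ.subst σ) (ψ.subst σ))) :=
        CHL.iff_trans (chl_subst_lab2 .and rfl rfl _ _ σ)
          (CHL.cg_and (chl_subst_lab2 .imp rfl rfl φ ψ σ) (chl_subst_lab2 .imp rfl rfl ψ φ σ))
      exact CHL.ofIff (CHL.iff_symm h3) (CHL.bisim (bisim_subst σ hb))
  | @lob φ _ ih =>
      refine CHL.lob ?_
      have h3 : CHL (Fm.iff ((Fm.imp (Fm.box φ) φ).subst σ)
          (Fm.imp (Fm.box (φ.subst σ)) (φ.subst σ))) :=
        CHL.iff_trans (chl_subst_lab2 .imp rfl rfl _ _ σ)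
          (CHL.cg_imp (chl_subst_lab1 .box rfl rfl φ σ) (CHL.iff_refl _))
      exact CHL.ofIff h3 ih

end Fm

end SubstClosure
section WellFounded
open Fm RGraph

namespace Fm

/-- Extract an injective cycle from a closed walk (over `ℕ`-indexed walks). -/
lemma cycle_of_closed_walk {V : Type} (E : V → V → Prop) :
    ∀ (k : ℕ) (f : ℕ → V), 1 ≤ k → (∀ i < k, E (f i) (f (i + 1))) → f k = f 0 →
    ∃ (m : ℕ) (g : Fin (m + 1) → V), Function.Injective g ∧
      (∀ i : Fin m, E (g i.castSucc) (g i.succ)) ∧ E (g (Fin.last m)) (g 0) ∧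
      (∀ i : Fin (m + 1), ∃ n < k, g i = f n) := by
  intro k
  induction k using Nat.strong_induction_on with
  | _ k IH =>
    intro f hk hedge hclose
    by_cases hinj : Function.Injective (fun i : Fin k => f i.1)
    · refine ⟨k - 1, fun i => f i.1, ?_, ?_, ?_, ?_⟩
      · intro i j hij
        have hk1 : k - 1 + 1 = k := by omega
        have h2 : (⟨i.1, by omega⟩ : Fin k) = ⟨j.1, by omega⟩ :=
          hinj (a₁ := ⟨i.1, by omega⟩) (a₂ := ⟨j.1, by omega⟩) hij
        have h3 := congrArg Fin.val h2
        exact Fin.ext h3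
      · intro i
        exact hedge i.1 (by omega)
      · have h1 : (Fin.last (k - 1)).1 = k - 1 := rfl
        have := hedge (k - 1) (by omega)
        rw [show k - 1 + 1 = k by omega, hclose] at this
        exact this
      · intro i
        exact ⟨i.1, by omega, rfl⟩
    · -- find a repeat and shorten the walk
      rw [Function.not_injective_iff] at hinj
      obtain ⟨i, j, hfij, hij⟩ := hinj
      -- wlog i < j
      rcases Nat.lt_or_ge i.1 j.1 with hlt | hge
      · have hk' : j.1 - i.1 < k := by omega
        obtain ⟨m, g, h1, h2, h3, h4⟩ := IH (j.1 - i.1) hk' (fun n => f (i.1 + n))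
          (by omega)
          (fun n hn => by
            have := hedge (i.1 + n) (by omega)
            simpa [Nat.add_assoc] using this)
          (by
            show f (i.1 + (j.1 - i.1)) = f (i.1 + 0)
            rw [show i.1 + (j.1 - i.1) = j.1 by omega]
            simpa using hfij.symm)
        refine ⟨m, g, h1, h2, h3, ?_⟩
        intro t
        obtain ⟨n, hn, hgn⟩ := h4 t
        exact ⟨i.1 + n, by omega, hgn⟩
      · have hlt' : j.1 < i.1 := by
          rcases Nat.lt_or_ge j.1 i.1 with h | h
          · exact h
          · exact absurd (Fin.ext (by omega)) hij
        have hk' : i.1 - j.1 < k := by omega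
        obtain ⟨m, g, h1, h2, h3, h4⟩ := IH (i.1 - j.1) hk' (fun n => f (j.1 + n))
          (by omega)
          (fun n hn => by
            have := hedge (j.1 + n) (by omega)
            simpa [Nat.add_assoc] using this)
          (by
            show f (j.1 + (i.1 - j.1)) = f (j.1 + 0)
            rw [show j.1 + (i.1 - j.1) = i.1 by omega]
            simpa using hfij)
        refine ⟨m, g, h1, h2, h3, ?_⟩
        intro t
        obtain ⟨n, hn, hgn⟩ := h4 t
        exact ⟨j.1 + n, by omega, hgn⟩

/-- A transitive-closure step yields an `ℕ`-indexed walk. -/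
lemma walk_of_transGen {V : Type} {E : V → V → Prop} {a b : V}
    (h : Relation.TransGen E a b) :
    ∃ (k : ℕ) (f : ℕ → V), 1 ≤ k ∧ f 0 = a ∧ f k = b ∧ ∀ i < k, E (f i) (f (i + 1)) := by
  induction h with
  | @single c h =>
      refine ⟨1, fun i => if i = 0 then a else c, le_refl 1, by simp, by simp, ?_⟩
      intro i hi
      have h1 : i = 0 := by omega
      subst h1
      simpa using h
  | @tail b' c _ hbc ih =>
      obtain ⟨k, f, hk, h0, hkb, hedge⟩ := ih
      refine ⟨k + 1, fun i => if i = k + 1 then c else f i, by omega, ?_, by simp, ?_⟩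
      · simp [show (0 : ℕ) ≠ k + 1 by omega, h0]
      · intro i hi
        by_cases hik : i = k
        · subst hik
          simpa [show i ≠ i + 1 by omega, hkb] using hbc
        · have h1 : i ≠ k + 1 := by omega
          have h2 : i + 1 ≠ k + 1 := by omega
          simpa [h1, h2, hik] using hedge i (by omega)

/-- In a guarded formula, the non-box edge relation supports no loops. -/
lemma no_transGen_edgeNB (φ : Fm) (hg : φ.Guarded) (a : φ.V) :
    ¬ Relation.TransGen φ.EdgeNB a a := by
  intro h
  obtain ⟨k, f, hk, h0, hka, hedge⟩ := walk_of_transGen h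
  have hclose : f k = f 0 := by rw [hka, h0]
  obtain ⟨m, g, hinj, hmid, hlast, hrange⟩ :=
    cycle_of_closed_walk φ.EdgeNB k f hk hedge hclose
  have hcyc : φ.IsCycle (Set.range g) :=
    ⟨m, g, hinj, rfl, fun i => (hmid i).1, hlast.1⟩
  obtain ⟨v, hv1, hv2⟩ := hg _ hcyc
  obtain ⟨i, rfl⟩ := hv1
  -- every walk vertex is a source of a non-box edge, hence not a box
  have hnb : φ.label (g i) ≠ .box := by
    rcases Nat.lt_or_ge i.1 m with hi | hi
    · have h1 : (⟨i.1, hi⟩ : Fin m).castSucc = i := Fin.ext rfl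
      have h2 := (hmid ⟨i.1, hi⟩).2
      rwa [h1] at h2
    · have h1 : i = Fin.last m := Fin.ext (by
        have := i.2
        simp only [Fin.val_last]
        omega)
      rw [h1]
      exact hlast.2
  exact hnb hv2

/-- The relation used for recursion over the non-box part of a formula. -/
def nbRel (φ : Fm) : φ.V → φ.V → Prop := fun b a => φ.EdgeNB a b

lemma nbRel_wf (φ : Fm) (hg : φ.Guarded) : WellFounded (nbRel φ) := by
  haveI := φ.fin
  have hirr : ∀ a, ¬ Relation.TransGen (nbRel φ) a a := by
    intro a ha
    refine no_transGen_edgeNB φ hg a ?_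
    have := Relation.transGen_swap.1 ha
    exact this
  haveI : IsTrans φ.V (Relation.TransGen (nbRel φ)) := inferInstance
  haveI : IsIrrefl φ.V (Relation.TransGen (nbRel φ)) := ⟨hirr⟩
  have hwf : WellFounded (Relation.TransGen (nbRel φ)) :=
    Finite.wellFounded_of_trans_of_irrefl _
  exact Subrelation.wf (fun {a b} h => Relation.TransGen.single h) hwf

end Fm

end WellFounded
section MainAssembly
open Fm RGraph

namespace Fm

lemma bigAnd_elim : ∀ (L : List Fm) (x : Fm), x ∈ L → CHL (Fm.imp (bigAnd L) x) := by
  intro L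
  induction L with
  | nil => intro x hx; cases hx
  | cons y L ih =>
      intro x hx
      rcases List.mem_cons.1 hx with rfl | hx
      · exact CHL.andE1 x (bigAnd L)
      · exact CHL.imp_trans (CHL.andE2 y (bigAnd L)) (ih x hx)

lemma bigAnd_intro {P : Fm} : ∀ (L : List Fm), (∀ x ∈ L, CHL (Fm.imp P x)) →
    CHL (Fm.imp P (bigAnd L)) := by
  intro L
  induction L with
  | nil => intro _; exact CHL.impTop P
  | cons y L ih =>
      intro h
      exact CHL.impAnd (h y List.mem_cons_self) (ih fun x hx => h x (List.mem_cons_of_mem y hx))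

/-- Simple-variable substitution. -/
def sub1 (p : ℕ) (x : Fm) : ℕ → Fm := fun q => if q = p then x else varFm q

/-- Local unfolding of a substitution graph at a 0-ary vertex. -/
lemma chl_T_lab0 (φ : Fm) (σ : ℕ → Fm) (a : φ.V) (l : FLab)
    (hl : φ.label a = l) (hv : varIdx l = none) (h0 : FLab.ar l = 0) :
    CHL (Fm.iff ((φ.subst σ).restrict (wv φ σ a)) (ofLab0 l)) := by
  have hv' : varIdx (φ.label a) = none := by rw [hl]; exact hv
  have hlw : (φ.subst σ).label (wv φ σ a) = l :=
    (subst_label_none φ σ a hv' _).trans hl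
  exact CHL.iff_of_bisim (bisim_restrict0 (φ.subst σ) (wv φ σ a) l hlw h0)

/-- Local unfolding of a substitution graph at a 1-ary vertex. -/
lemma chl_T_lab1 (φ : Fm) (σ : ℕ → Fm) (a : φ.V) (l : FLab)
    (hl : φ.label a = l) (hv : varIdx l = none) (h1 : FLab.ar l = 1)
    (j : Fin (FLab.ar (φ.label a))) :
    CHL (Fm.iff ((φ.subst σ).restrict (wv φ σ a))
      (ofLab1 l ((φ.subst σ).restrict (wv φ σ (φ.succ a j))))) := by
  set G := φ.subst σ with hG
  have hv' : varIdx (φ.label a) = none := by rw [hl]; exact hv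
  have hlw : G.label (wv φ σ a) = l := (subst_label_none φ σ a hv' _).trans hl
  have e : (G.label (wv φ σ a)).ar = (φ.label a).ar := by rw [hlw, ← hl]
  let i0 : Fin (FLab.ar (G.label (wv φ σ a))) := ⟨j.1, by rw [e]; exact j.2⟩
  have t2 := CHL.iff_of_bisim (bisim_restrict1 G (wv φ σ a) l hlw h1 i0)
  have hsucc : G.succ (wv φ σ a) i0 = wv φ σ (φ.succ a j) := by
    show (φ.subst σ).succ ⟨a, copyRoot σ _⟩ i0 = _
    rw [subst_succ_none φ σ a hv' _ i0 e]
    exact congrArg (wv φ σ) (φ.succ_congr rfl rfl)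
  rwa [hsucc] at t2

/-- Local unfolding of a substitution graph at a 2-ary vertex. -/
lemma chl_T_lab2 (φ : Fm) (σ : ℕ → Fm) (a : φ.V) (l : FLab)
    (hl : φ.label a = l) (hv : varIdx l = none) (h2 : FLab.ar l = 2)
    (j0 j1 : Fin (FLab.ar (φ.label a))) (hj0 : (j0 : ℕ) = 0) (hj1 : (j1 : ℕ) = 1) :
    CHL (Fm.iff ((φ.subst σ).restrict (wv φ σ a))
      (ofLab2 l ((φ.subst σ).restrict (wv φ σ (φ.succ a j0)))
        ((φ.subst σ).restrict (wv φ σ (φ.succ a j1))))) := by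
  set G := φ.subst σ with hG
  have hv' : varIdx (φ.label a) = none := by rw [hl]; exact hv
  have hlw : G.label (wv φ σ a) = l := (subst_label_none φ σ a hv' _).trans hl
  have e : (G.label (wv φ σ a)).ar = (φ.label a).ar := by rw [hlw, ← hl]
  let i0 : Fin (FLab.ar (G.label (wv φ σ a))) := ⟨j0.1, by rw [e]; exact j0.2⟩
  let i1 : Fin (FLab.ar (G.label (wv φ σ a))) := ⟨j1.1, by rw [e]; exact j1.2⟩
  have t2 := CHL.iff_of_bisim (bisim_restrict2 G (wv φ σ a) l hlw h2 i0 i1 hj0 hj1)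
  have hsucc0 : G.succ (wv φ σ a) i0 = wv φ σ (φ.succ a j0) := by
    show (φ.subst σ).succ ⟨a, copyRoot σ _⟩ i0 = _
    rw [subst_succ_none φ σ a hv' _ i0 e]
    exact congrArg (wv φ σ) (φ.succ_congr rfl rfl)
  have hsucc1 : G.succ (wv φ σ a) i1 = wv φ σ (φ.succ a j1) := by
    show (φ.subst σ).succ ⟨a, copyRoot σ _⟩ i1 = _
    rw [subst_succ_none φ σ a hv' _ i1 e]
    exact congrArg (wv φ σ) (φ.succ_congr rfl rfl)
  rwa [hsucc0, hsucc1] at t2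

/-- Uniqueness of guarded fixed points in `CHL`. -/
theorem chl_fix_unique (φ : Fm) (hg : φ.Guarded) (p : ℕ) (hm : φ.Modalised p)
    (A B : Fm) (hA : CHL (Fm.iff A (φ.subst (sub1 p A))))
    (hB : CHL (Fm.iff B (φ.subst (sub1 p B)))) :
    CHL (Fm.iff A B) := by
  classical
  haveI := φ.fin
  haveI : Fintype φ.V := Fintype.ofFinite _
  set σA := sub1 p A with hσA
  set σB := sub1 p B with hσB
  set TA : φ.V → Fm := fun a => (φ.subst σA).restrict (wv φ σA a) with hTA
  set TB : φ.V → Fm := fun a => (φ.subst σB).restrict (wv φ σB a) with hTB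
  set L : List Fm :=
    Fm.iff A B :: ((Finset.univ : Finset φ.V).toList.map fun a => Fm.iff (TA a) (TB a))
    with hL
  set D := bigAnd L with hD
  have memL : ∀ a : φ.V, Fm.iff (TA a) (TB a) ∈ L := fun a =>
    List.mem_cons_of_mem _ (List.mem_map_of_mem (Finset.mem_toList.2 (Finset.mem_univ a)))
  have memHead : Fm.iff A B ∈ L := List.mem_cons_self
  -- the main induction
  have core : ∀ (P : φ.V → Prop), (∀ a b, P a → φ.EdgeNB a b → P b) →
      (∀ a, P a → φ.label a = .var p → CHL (Fm.imp (Fm.box D) (Fm.iff A B))) →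
      ∀ a, P a → CHL (Fm.imp (Fm.box D) (Fm.iff (TA a) (TB a))) := by
    intro P hP hp a
    induction a using (nbRel_wf φ hg).induction with
    | _ a IH =>
    intro hPa
    obtain ⟨l, hl⟩ : ∃ l, φ.label a = l := ⟨_, rfl⟩
    cases l with
    | top =>
        exact CHL.weaken _ (CHL.iff_trans (chl_T_lab0 φ σA a .top hl rfl rfl)
          (CHL.iff_symm (chl_T_lab0 φ σB a .top hl rfl rfl)))
    | bot =>
        exact CHL.weaken _ (CHL.iff_trans (chl_T_lab0 φ σA a .bot hl rfl rfl)
          (CHL.iff_symm (chl_T_lab0 φ σB a .bot hl rfl rfl)))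
    | var q =>
        by_cases hqp : q = p
        · subst hqp
          have eA : σA q = A := if_pos rfl
          have eB : σB q = B := if_pos rfl
          have tA : CHL (Fm.iff (TA a) A) :=
            eA ▸ CHL.iff_of_bisim (bisim_subst_copy φ σA a hl)
          have tB : CHL (Fm.iff (TB a) B) :=
            eB ▸ CHL.iff_of_bisim (bisim_subst_copy φ σB a hl)
          exact CHL.W5 (hp a hPa hl) tA tB
        · have eA : σA q = varFm q := if_neg hqp
          have eB : σB q = varFm q := if_neg hqp
          have tA : CHL (Fm.iff (TA a) (varFm q)) :=
            eA ▸ CHL.iff_of_bisim (bisim_subst_copy φ σA a hl)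
          have tB : CHL (Fm.iff (TB a) (varFm q)) :=
            eB ▸ CHL.iff_of_bisim (bisim_subst_copy φ σB a hl)
          exact CHL.weaken _ (CHL.iff_trans tA (CHL.iff_symm tB))
    | neg =>
        let j : Fin (FLab.ar (φ.label a)) := ⟨0, by rw [hl]; decide⟩
        have hedge : φ.EdgeNB a (φ.succ a j) := ⟨⟨j, rfl⟩, by rw [hl]; decide⟩
        have ihb := IH (φ.succ a j) hedge (hP a _ hPa hedge)
        exact CHL.Wneg ihb (chl_T_lab1 φ σA a .neg hl rfl rfl j)
          (chl_T_lab1 φ σB a .neg hl rfl rfl j)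
    | box =>
        let j : Fin (FLab.ar (φ.label a)) := ⟨0, by rw [hl]; decide⟩
        set b := φ.succ a j with hb
        have step1 : CHL (Fm.imp D (Fm.iff (TA b) (TB b))) := bigAnd_elim L _ (memL b)
        have step2 : CHL (Fm.imp (Fm.box D) (Fm.box (Fm.iff (TA b) (TB b)))) :=
          CHL.box_mono step1
        have step3 : CHL (Fm.imp (Fm.box D) (Fm.iff (Fm.box (TA b)) (Fm.box (TB b)))) :=
          CHL.imp_trans step2 (CHL.K_iff (TA b) (TB b))
        exact CHL.W5 step3 (chl_T_lab1 φ σA a .box hl rfl rfl j)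
          (chl_T_lab1 φ σB a .box hl rfl rfl j)
    | and =>
        let j0 : Fin (FLab.ar (φ.label a)) := ⟨0, by rw [hl]; decide⟩
        let j1 : Fin (FLab.ar (φ.label a)) := ⟨1, by rw [hl]; decide⟩
        have hedge0 : φ.EdgeNB a (φ.succ a j0) := ⟨⟨j0, rfl⟩, by rw [hl]; decide⟩
        have hedge1 : φ.EdgeNB a (φ.succ a j1) := ⟨⟨j1, rfl⟩, by rw [hl]; decide⟩
        have ih0 := IH (φ.succ a j0) hedge0 (hP a _ hPa hedge0)
        have ih1 := IH (φ.succ a j1) hedge1 (hP a _ hPa hedge1)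
        exact CHL.Wand ih0 ih1 (chl_T_lab2 φ σA a .and hl rfl rfl j0 j1 rfl rfl)
          (chl_T_lab2 φ σB a .and hl rfl rfl j0 j1 rfl rfl)
    | or =>
        let j0 : Fin (FLab.ar (φ.label a)) := ⟨0, by rw [hl]; decide⟩
        let j1 : Fin (FLab.ar (φ.label a)) := ⟨1, by rw [hl]; decide⟩
        have hedge0 : φ.EdgeNB a (φ.succ a j0) := ⟨⟨j0, rfl⟩, by rw [hl]; decide⟩
        have hedge1 : φ.EdgeNB a (φ.succ a j1) := ⟨⟨j1, rfl⟩, by rw [hl]; decide⟩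
        have ih0 := IH (φ.succ a j0) hedge0 (hP a _ hPa hedge0)
        have ih1 := IH (φ.succ a j1) hedge1 (hP a _ hPa hedge1)
        exact CHL.Wor ih0 ih1 (chl_T_lab2 φ σA a .or hl rfl rfl j0 j1 rfl rfl)
          (chl_T_lab2 φ σB a .or hl rfl rfl j0 j1 rfl rfl)
    | imp =>
        let j0 : Fin (FLab.ar (φ.label a)) := ⟨0, by rw [hl]; decide⟩
        let j1 : Fin (FLab.ar (φ.label a)) := ⟨1, by rw [hl]; decide⟩
        have hedge0 : φ.EdgeNB a (φ.succ a j0) := ⟨⟨j0, rfl⟩, by rw [hl]; decide⟩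
        have hedge1 : φ.EdgeNB a (φ.succ a j1) := ⟨⟨j1, rfl⟩, by rw [hl]; decide⟩
        have ih0 := IH (φ.succ a j0) hedge0 (hP a _ hPa hedge0)
        have ih1 := IH (φ.succ a j1) hedge1 (hP a _ hPa hedge1)
        exact CHL.Wimp ih0 ih1 (chl_T_lab2 φ σA a .imp hl rfl rfl j0 j1 rfl rfl)
          (chl_T_lab2 φ σB a .imp hl rfl rfl j0 j1 rfl rfl)
  -- first, the reachable stratum, where no `p` occurs
  have coreS := core (fun a => Relation.ReflTransGen φ.EdgeNB φ.root a)
    (fun a b ha hab => ha.tail hab)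
    (fun a ha hlab => absurd hlab (hm a ha))
  have hroot : CHL (Fm.imp (Fm.box D) (Fm.iff (TA φ.root) (TB φ.root))) :=
    coreS φ.root Relation.ReflTransGen.refl
  have hAroot : CHL (Fm.iff A (TA φ.root)) :=
    CHL.iff_trans hA (CHL.iff_symm (CHL.iff_of_bisim (bisim_restrict_root (φ.subst σA))))
  have hBroot : CHL (Fm.iff B (TB φ.root)) :=
    CHL.iff_trans hB (CHL.iff_symm (CHL.iff_of_bisim (bisim_restrict_root (φ.subst σB))))
  have Hp : CHL (Fm.imp (Fm.box D) (Fm.iff A B)) := CHL.W5 hroot hAroot hBroot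
  have coreAll := core (fun _ => True) (fun _ _ _ _ => trivial) (fun _ _ _ => Hp)
  have hBoxD : CHL (Fm.imp (Fm.box D) D) := by
    refine bigAnd_intro L ?_
    intro x hx
    rcases List.mem_cons.1 hx with rfl | hx
    · exact Hp
    · obtain ⟨a, _, rfl⟩ := List.mem_map.1 hx
      exact coreAll a trivial
  have hDuh : CHL D := CHL.lob hBoxD
  exact CHL.mp (bigAnd_elim L _ memHead) hDuh

end Fm

end MainAssembly
/-- Theorem `equismurf` (intersubstitutivity of provable equivalents
under the fixed point operator): if `φ` and `ψ` are modalised in `p` and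
`CHL ⊢ φ ↔ ψ`, then `CHL ⊢ Ϝp.φ ↔ Ϝp.ψ`. -/
theorem fix_congruence (φ ψ : Fm) (p : ℕ) (hφ : φ.WF) (hψ : ψ.WF)
    (hmφ : φ.Modalised p) (hmψ : ψ.Modalised p)
    (h : CHL (Fm.iff φ ψ)) :
    CHL (Fm.iff (φ.fix p hmφ.root_ne) (ψ.fix p hmψ.root_ne)) := by
  set A := φ.fix p hmφ.root_ne with hAdef
  set B := ψ.fix p hmψ.root_ne with hBdef
  have hA : CHL (Fm.iff A (φ.subst (Fm.sub1 p A))) :=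
    CHL.iff_of_bisim (Fm.bisim_fix φ p hmφ.root_ne _ (if_pos rfl) (fun q hq => if_neg hq))
  have hB' : CHL (Fm.iff B (ψ.subst (Fm.sub1 p B))) :=
    CHL.iff_of_bisim (Fm.bisim_fix ψ p hmψ.root_ne _ (if_pos rfl) (fun q hq => if_neg hq))
  have hsub : CHL ((Fm.iff φ ψ).subst (Fm.sub1 p B)) :=
    Fm.chl_subst_closed (Fm.sub1 p B) h
  have hsplit : CHL (Fm.iff ((Fm.iff φ ψ).subst (Fm.sub1 p B))
      (Fm.iff (φ.subst (Fm.sub1 p B)) (ψ.subst (Fm.sub1 p B)))) :=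
    CHL.iff_trans (Fm.chl_subst_lab2 .and rfl rfl _ _ _)
      (CHL.cg_and (Fm.chl_subst_lab2 .imp rfl rfl φ ψ _)
        (Fm.chl_subst_lab2 .imp rfl rfl ψ φ _))
  have hφψB : CHL (Fm.iff (φ.subst (Fm.sub1 p B)) (ψ.subst (Fm.sub1 p B))) :=
    CHL.ofIff hsplit hsub
  have hB : CHL (Fm.iff B (φ.subst (Fm.sub1 p B))) :=
    CHL.iff_trans hB' (CHL.iff_symm hφψB)
  exact Fm.chl_fix_unique φ hφ.2 p hmφ A B hA hB
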